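/- arXiv:math/9908003 — 5 statements merged into one kernel-verified Lean document; each statement's English description precedes it below -/
import Mathlib

section
/- For every positive integer n and every body K ⊂ ℝ^d there exists a finite Borel measure μ on ℝ^d such that whenever packings A, B of K satisfy A ≽_{C,n} B with A ≠ B, the strict inequality (μ * χ_A)(p) > (μ * χ_B)(p) holds at every point p ∈ ℝ^d. -/
open MeasureTheory Metric Filter Pointwise
open scoped ENNReal NNReal

noncomputable section

abbrev Euc (d : ℕ) : Type := EuclideanSpace ℝ (Fin d)

/-- A body: a compact domain (compact set equal to the closure of its interior). -/
def IsBody {d : ℕ} (K : Set (Euc d)) : Prop :=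
  IsCompact K ∧ K = closure (interior K)

/-- `D` is an isometric copy of `K`. -/
def IsIsomCopy {d : ℕ} (K D : Set (Euc d)) : Prop :=
  ∃ f : Euc d ≃ᵢ Euc d, D = f '' K

def PairwiseDisjointInteriors {d : ℕ} (P : Set (Set (Euc d))) : Prop :=
  P.Pairwise fun D E => interior D ∩ interior E = ∅

/-- A packing of the body `K`: a collection of isometric copies of `K`
with pairwise disjoint interiors. -/
def IsPacking {d : ℕ} (K : Set (Euc d)) (P : Set (Set (Euc d))) : Prop :=
  (∀ D ∈ P, IsIsomCopy K D) ∧ PairwiseDisjointInteriors P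

/-- Translate every element of a collection by the vector `v`. -/
def translatePacking {d : ℕ} (v : Euc d) (P : Set (Set (Euc d))) : Set (Set (Euc d)) :=
  (fun D => (fun x => x + v) '' D) '' P

/-- The fraction of the ball `B(p,r)` covered by the collection `P`
(the sum over elements of `P` of the volume of the intersection, divided
by the volume of the ball). -/
def ballFrac {d : ℕ} (P : Set (Set (Euc d))) (p : Euc d) (r : ℝ) : ℝ :=
  ((∑' D : P, volume ((D : Set (Euc d)) ∩ ball p r)) / volume (ball p r)).toReal

/-- `P` has density `δ`. -/
def HasDensity {d : ℕ} (P : Set (Set (Euc d))) (δ : ℝ) : Prop :=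
  ∀ p : Euc d, Tendsto (fun r => ballFrac P p r) atTop (nhds δ)

/-- `P` has density `δ` uniformly in the center point. -/
def HasUniformDensity {d : ℕ} (P : Set (Set (Euc d))) (δ : ℝ) : Prop :=
  TendstoUniformly (fun r (p : Euc d) => ballFrac P p r) (fun _ => δ) atTop

/-- The packing density of the body `K`. -/
def packingDensity {d : ℕ} (K : Set (Euc d)) : ℝ :=
  sSup {δ : ℝ | ∃ P, IsPacking K P ∧ HasDensity P δ}

/-- Modified Hausdorff distance at most `ε` between two collections: there is a
relation between elements, related elements are at Hausdorff distance at most `ε`,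
and every element meeting the ball `B(0,1/ε)` is related to a unique element on
the other side. -/
def PackingClose {d : ℕ} (ε : ℝ) (P Q : Set (Set (Euc d))) : Prop :=
  ∃ R : Set (Euc d) → Set (Euc d) → Prop,
    (∀ A B, R A B → A ∈ P ∧ B ∈ Q ∧ Metric.hausdorffDist A B ≤ ε) ∧
    (∀ A ∈ P, (A ∩ ball (0 : Euc d) (1 / ε)).Nonempty → ∃! B, R A B) ∧
    (∀ B ∈ Q, (B ∩ ball (0 : Euc d) (1 / ε)).Nonempty → ∃! A, R A B)

/-- Convergence of a sequence of collections to `Q` in the modified Hausdorff topology. -/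
def PackingTendsto {d : ℕ} (Ps : ℕ → Set (Set (Euc d))) (Q : Set (Set (Euc d))) : Prop :=
  ∀ ε : ℝ, 0 < ε → ∀ᶠ n in atTop, PackingClose ε (Ps n) Q

/-- `A ≽_L B` : some sequence of translates of `B` converges to `A`. -/
def IsLimitOf {d : ℕ} (A B : Set (Set (Euc d))) : Prop :=
  ∃ v : ℕ → Euc d, PackingTendsto (fun n => translatePacking (v n) B) A

/-- A packing of `K` is uniformly recurrent if it is maximal with respect to `≽_L`
among packings of `K`. -/
def UniformlyRecurrent {d : ℕ} (K : Set (Euc d)) (A : Set (Set (Euc d))) : Prop :=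
  ∀ B, IsPacking K B → IsLimitOf B A → IsLimitOf A B

/-- `P` is `n`-saturated: one cannot remove `n-1` of its elements and replace them
by `n` isometric copies of `K` so that the result is still a packing. -/
def Saturated {d : ℕ} (K : Set (Euc d)) (n : ℕ) (P : Set (Set (Euc d))) : Prop :=
  ¬ ∃ F G : Finset (Set (Euc d)), ↑F ⊆ P ∧ F.card = n - 1 ∧ G.card = n ∧
      Disjoint (↑G : Set (Set (Euc d))) (P \ ↑F) ∧
      IsPacking K ((P \ ↑F) ∪ ↑G)

def CompletelySaturated {d : ℕ} (K : Set (Euc d)) (P : Set (Set (Euc d))) : Prop :=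
  ∀ n : ℕ, 1 ≤ n → Saturated K n P

/-- `K` (strictly) self-nests: for every `ε > 0` some isometric copy of `K` lies in
the interior of `(1+ε)K`. -/
def SelfNests {d : ℕ} (K : Set (Euc d)) : Prop :=
  ∀ ε : ℝ, 0 < ε → ∃ f : Euc d ≃ᵢ Euc d, f '' K ⊆ interior ((1 + ε) • K)

/-- A single connected replacement: `A` is obtained from `B` by replacing `k < n`
copies of `K` by `k+1` copies so that the union of the `2k+1` copies involved is
connected. -/
def ConnStep {d : ℕ} (K : Set (Euc d)) (n : ℕ) (B A : Set (Set (Euc d))) : Prop :=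
  ∃ (k : ℕ) (F G : Finset (Set (Euc d))), k < n ∧ ↑F ⊆ B ∧ F.card = k ∧ G.card = k + 1 ∧
    Disjoint (↑G : Set (Set (Euc d))) (B \ ↑F) ∧
    A = (B \ ↑F) ∪ ↑G ∧ IsPacking K A ∧
    IsConnected (⋃ D ∈ (↑F ∪ ↑G : Set (Set (Euc d))), D)

/-- `A ≽_{C,n} B` : `A` is obtained from `B` by finitely many connected replacements. -/
def ConnGE {d : ℕ} (K : Set (Euc d)) (n : ℕ) (A B : Set (Set (Euc d))) : Prop :=
  Relation.ReflTransGen (ConnStep K n) B A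

/-- The density function of the convolution `μ * χ_P` evaluated at the point `p`:
`∑_{D ∈ P} μ {x | p - x ∈ D}`. -/
def diffuse {d : ℕ} (μ : Measure (Euc d)) (P : Set (Set (Euc d))) (p : Euc d) : ℝ≥0∞ :=
  ∑' D : P, μ {x : Euc d | p - x ∈ (D : Set (Euc d))}

/-- The value of the measure `χ_P * μ` on the (Borel) set `R`. -/
def diffuseOn {d : ℕ} (μ : Measure (Euc d)) (P : Set (Set (Euc d))) (R : Set (Euc d)) : ℝ≥0∞ :=
  ∫⁻ p in R, diffuse μ P p

/-- The measure with density `(n/(n+1))^{|x|/(2n-1)}` with respect to Lebesgue measure. -/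
def kupMeasure (d n : ℕ) : Measure (Euc d) :=
  volume.withDensity fun x =>
    ENNReal.ofReal (((n : ℝ) / (n + 1)) ^ (‖x‖ / (2 * (n : ℝ) - 1)))

/-- A generic packing: a collection of bodies with pairwise disjoint interiors. -/
def IsGenPacking {d : ℕ} (P : Set (Set (Euc d))) : Prop :=
  (∀ D ∈ P, IsBody D) ∧ PairwiseDisjointInteriors P

/-- `A ≽_μ B` : `μ * χ_A ≥ μ * χ_B` everywhere. -/
def MuDom {d : ℕ} (μ : Measure (Euc d)) (A B : Set (Set (Euc d))) : Prop :=
  ∀ p : Euc d, diffuse μ B p ≤ diffuse μ A p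

/-- `A ≽_D B` : `A` diffusively dominates `B`. -/
def DiffDom {d : ℕ} (A B : Set (Set (Euc d))) : Prop :=
  ∃ μ : Measure (Euc d), IsFiniteMeasure μ ∧ MuDom μ A B

/-- `P` is weakly recurrent if it is the limit of a sequence of uniformly
recurrent packings of `K`. -/
def WeaklyRecurrent {d : ℕ} (K : Set (Euc d)) (P : Set (Set (Euc d))) : Prop :=
  ∃ Bs : ℕ → Set (Set (Euc d)),
    (∀ i, IsPacking K (Bs i) ∧ UniformlyRecurrent K (Bs i)) ∧ PackingTendsto Bs P



-- ===================== auxiliary development =====================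
open Bornology
open scoped Classical


noncomputable def chainR {X : Type*} [MetricSpace X] (S : Finset (Set X)) (A : Set X) :
    ℕ → Finset (Set X)
  | 0 => {A}
  | (m+1) => chainR S A m ∪
      S.filter (fun E => (E ∩ ⋃ D ∈ (chainR S A m : Set (Set X)), D).Nonempty)

lemma chainR_mono {X : Type*} [MetricSpace X] (S : Finset (Set X)) (A : Set X) (m : ℕ) :
    chainR S A m ⊆ chainR S A (m+1) := by
  rw [chainR]; exact Finset.subset_union_left

lemma chainR_subset {X : Type*} [MetricSpace X] {S : Finset (Set X)} {A : Set X}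
    (hA : A ∈ S) (m : ℕ) : chainR S A m ⊆ S := by
  induction m with
  | zero => rw [chainR]; simpa using hA
  | succ m ih => rw [chainR]; exact Finset.union_subset ih (Finset.filter_subset _ _)

lemma chainR_stab {X : Type*} [MetricSpace X] (S : Finset (Set X)) (A : Set X) {j : ℕ}
    (h : chainR S A j = chainR S A (j+1)) :
    ∀ m, j ≤ m → chainR S A m = chainR S A j := by
  intro m hm
  induction m with
  | zero => have : j = 0 := by omega
            rw [this]
  | succ m ih =>
    rcases Nat.lt_or_ge j (m+1) with hlt | hge
    · have hjm : j ≤ m := by omega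
      have hmj := ih hjm
      show chainR S A (m+1) = chainR S A j
      calc chainR S A (m+1)
          = chainR S A m ∪ S.filter
              (fun E => (E ∩ ⋃ D ∈ (chainR S A m : Set (Set X)), D).Nonempty) := by rw [chainR]
        _ = chainR S A j ∪ S.filter
              (fun E => (E ∩ ⋃ D ∈ (chainR S A j : Set (Set X)), D).Nonempty) := by rw [hmj]
        _ = chainR S A (j+1) := by rw [chainR]
        _ = chainR S A j := h.symm
    · have : j = m + 1 := by omega
      rw [this]

lemma chainR_card {X : Type*} [MetricSpace X] (S : Finset (Set X)) (A : Set X) :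
    ∀ m, (∀ j < m, chainR S A j ≠ chainR S A (j+1)) → m + 1 ≤ (chainR S A m).card := by
  intro m
  induction m with
  | zero => intro _; rw [chainR]; simp
  | succ m ih =>
    intro hne
    have h1 : m + 1 ≤ (chainR S A m).card := ih (fun j hj => hne j (by omega))
    have h2 : chainR S A m ⊂ chainR S A (m+1) :=
      Finset.ssubset_iff_subset_ne.2 ⟨chainR_mono S A m, hne m (by omega)⟩
    have := Finset.card_lt_card h2
    omega

/-- There is a stable stage `j ≤ S.card`. -/
lemma chainR_exists_stable {X : Type*} [MetricSpace X] {S : Finset (Set X)} {A : Set X}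
    (hA : A ∈ S) : ∃ j ≤ S.card, chainR S A j = chainR S A (j+1) := by
  by_contra hcon
  push_neg at hcon
  have := chainR_card S A (S.card + 1) (fun j hj => hcon j (by omega))
  have hle := Finset.card_le_card (chainR_subset hA (S.card + 1))
  omega

/-- Main chain lemma: a connected finite union of compact sets of diameter at most `c`
has all pairwise distances at most `(card + 1) * c`. -/
lemma chain_diam {X : Type*} [MetricSpace X] [T2Space X] (S : Finset (Set X)) (c : ℝ)
    (hc : 0 ≤ c)
    (hcomp : ∀ D ∈ S, IsCompact D) (hdiam : ∀ D ∈ S, Metric.diam D ≤ c)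
    (hconn : IsPreconnected (⋃ D ∈ (S : Set (Set X)), D)) :
    ∀ x ∈ ⋃ D ∈ (S : Set (Set X)), D, ∀ y ∈ ⋃ D ∈ (S : Set (Set X)), D,
      dist x y ≤ (S.card + 1) * c := by
  intro x hx y hy
  rw [Set.mem_iUnion₂] at hx hy
  obtain ⟨A, hA, hxA⟩ := hx
  obtain ⟨E₀, hE₀, hyE₀⟩ := hy
  -- distance estimate along the BFS
  have hdistR : ∀ m, ∀ z ∈ ⋃ D ∈ (chainR S A m : Set (Set X)), D,
      dist x z ≤ (m + 1 : ℝ) * c := by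
    intro m
    induction m with
    | zero =>
      intro z hz
      rw [chainR] at hz
      simp only [Finset.coe_singleton, Set.mem_iUnion₂] at hz
      obtain ⟨D, hD, hzD⟩ := hz
      rw [Set.mem_singleton_iff] at hD
      rw [hD] at hzD
      have := Metric.dist_le_diam_of_mem (hcomp A hA).isBounded hxA hzD
      have := hdiam A hA
      push_cast
      linarith
    | succ m ih =>
      intro z hz
      rw [Set.mem_iUnion₂] at hz
      obtain ⟨D, hD, hzD⟩ := hz
      rw [chainR, Finset.mem_coe, Finset.mem_union] at hD
      rcases hD with hD | hD
      · have := ih z (Set.mem_iUnion₂.2 ⟨D, hD, hzD⟩)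
        push_cast
        push_cast at this
        linarith
      · rw [Finset.mem_filter] at hD
        obtain ⟨hDS, w, hwD, hwU⟩ := hD
        have h1 : dist x w ≤ (m + 1 : ℝ) * c := ih w hwU
        have h2 : dist w z ≤ c := by
          have := Metric.dist_le_diam_of_mem (hcomp D hDS).isBounded hwD hzD
          have := hdiam D hDS
          linarith
        have := dist_triangle x w z
        push_cast
        push_cast at h1
        linarith
  obtain ⟨j, hj, hstable⟩ := chainR_exists_stable hA
  -- the stable family absorbs everything it touches
  have habs : ∀ E ∈ S, (E ∩ ⋃ D ∈ (chainR S A j : Set (Set X)), D).Nonempty →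
      E ∈ chainR S A j := by
    intro E hES hEne
    have : E ∈ chainR S A (j+1) := by
      rw [chainR, Finset.mem_union]
      right
      rw [Finset.mem_filter]
      exact ⟨hES, hEne⟩
    rwa [← hstable] at this
  -- y belongs to the union over the stable family
  have hyT : y ∈ ⋃ D ∈ (chainR S A j : Set (Set X)), D := by
    by_contra hyn
    have hE₀T : E₀ ∉ chainR S A j := by
      intro hmem
      exact hyn (Set.mem_iUnion₂.2 ⟨E₀, hmem, hyE₀⟩)
    set U₁ : Set X := ⋃ D ∈ (chainR S A j : Set (Set X)), D with hU₁
    set U₂ : Set X := ⋃ D ∈ ((S \ chainR S A j : Finset (Set X)) : Set (Set X)), D with hU₂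
    have hU₁c : IsClosed U₁ := by
      apply Set.Finite.isClosed_biUnion (Finset.finite_toSet _)
      intro D hD
      exact (hcomp D (chainR_subset hA j (Finset.mem_coe.1 hD))).isClosed
    have hU₂c : IsClosed U₂ := by
      apply Set.Finite.isClosed_biUnion (Finset.finite_toSet _)
      intro D hD
      rw [Finset.mem_coe, Finset.mem_sdiff] at hD
      exact (hcomp D hD.1).isClosed
    have hsub : (⋃ D ∈ (S : Set (Set X)), D) ⊆ U₁ ∪ U₂ := by
      intro z hz
      rw [Set.mem_iUnion₂] at hz
      obtain ⟨D, hD, hzD⟩ := hz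
      by_cases hDT : D ∈ chainR S A j
      · exact Or.inl (Set.mem_iUnion₂.2 ⟨D, hDT, hzD⟩)
      · exact Or.inr (Set.mem_iUnion₂.2 ⟨D, by
          rw [Finset.mem_coe, Finset.mem_sdiff]; exact ⟨hD, hDT⟩, hzD⟩)
    have hxU₁ : x ∈ (⋃ D ∈ (S : Set (Set X)), D) ∩ U₁ := by
      have hAj : A ∈ chainR S A j := by
        have : ∀ m, A ∈ chainR S A m := by
          intro m
          induction m with
          | zero => rw [chainR]; simp
          | succ m ih => exact chainR_mono S A m ih
        exact this j
      exact ⟨Set.mem_iUnion₂.2 ⟨A, hA, hxA⟩, Set.mem_iUnion₂.2 ⟨A, hAj, hxA⟩⟩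
    have hyU₂ : y ∈ (⋃ D ∈ (S : Set (Set X)), D) ∩ U₂ := by
      refine ⟨Set.mem_iUnion₂.2 ⟨E₀, hE₀, hyE₀⟩, Set.mem_iUnion₂.2 ⟨E₀, ?_, hyE₀⟩⟩
      rw [Finset.mem_coe, Finset.mem_sdiff]
      exact ⟨hE₀, hE₀T⟩
    have := (isPreconnected_closed_iff.1 hconn) U₁ U₂ hU₁c hU₂c hsub ⟨x, hxU₁⟩ ⟨y, hyU₂⟩
    obtain ⟨z, _, hz₁, hz₂⟩ := this
    rw [Set.mem_iUnion₂] at hz₁ hz₂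
    obtain ⟨D₁, hD₁, hzD₁⟩ := hz₁
    obtain ⟨D₂, hD₂, hzD₂⟩ := hz₂
    rw [Finset.mem_coe, Finset.mem_sdiff] at hD₂
    exact hD₂.2 (habs D₂ hD₂.1 ⟨z, hzD₂, Set.mem_iUnion₂.2 ⟨D₁, hD₁, hzD₁⟩⟩)
  have := hdistR j y hyT
  have hcard : (j : ℝ) + 1 ≤ (S.card : ℝ) + 1 := by
    have : (j : ℝ) ≤ S.card := by exact_mod_cast hj
    linarith
  calc dist x y ≤ (j + 1 : ℝ) * c := this
    _ ≤ ((S.card : ℝ) + 1) * c := by nlinarith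




def rho (d : ℕ) (s : ℝ) : Euc d → ℝ≥0∞ :=
  fun x => ENNReal.ofReal (Real.exp (-(s * ‖x‖)))

lemma rho_pos {d : ℕ} (s : ℝ) (x : Euc d) : 0 < rho d s x :=
  ENNReal.ofReal_pos.2 (Real.exp_pos _)

lemma rho_ne_top {d : ℕ} (s : ℝ) (x : Euc d) : rho d s x ≠ ∞ := ENNReal.ofReal_ne_top

lemma rho_le_one {d : ℕ} {s : ℝ} (hs : 0 ≤ s) (x : Euc d) : rho d s x ≤ 1 := by
  rw [rho, ← ENNReal.ofReal_one]
  apply ENNReal.ofReal_le_ofReal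
  rw [← Real.exp_zero]
  apply Real.exp_le_exp.2
  have : 0 ≤ s * ‖x‖ := mul_nonneg hs (norm_nonneg x)
  linarith

lemma rho_continuous {d : ℕ} (s : ℝ) : Continuous (rho d s) := by
  apply ENNReal.continuous_ofReal.comp
  exact Real.continuous_exp.comp ((continuous_const.mul continuous_norm).neg)

lemma rho_measurable {d : ℕ} (s : ℝ) : Measurable (rho d s) := (rho_continuous s).measurable

def kmeas (d : ℕ) (s : ℝ) : Measure (Euc d) := volume.withDensity (rho d s)

/-- Every isometric equivalence of Euclidean space is measure preserving. -/
lemma isomEquiv_measurePreserving {d : ℕ} (f : Euc d ≃ᵢ Euc d) :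
    MeasurePreserving f volume volume := by
  have h := f.toRealLinearIsometryEquiv.measurePreserving
  have heq : ⇑f = (fun x => x + f 0) ∘ ⇑f.toRealLinearIsometryEquiv := by
    funext x
    simp [IsometryEquiv.toRealLinearIsometryEquiv_apply]
  rw [heq]
  exact (measurePreserving_add_right volume (f 0)).comp h

/-- The isometric equivalence `x ↦ p - x`. -/
def subIso {d : ℕ} (p : Euc d) : Euc d ≃ᵢ Euc d where
  toEquiv := Equiv.subLeft p
  isometry_toFun := Isometry.of_dist_eq (fun a b => by
    show dist (p - a) (p - b) = dist a b
    rw [dist_eq_norm, dist_eq_norm, sub_sub_sub_cancel_left, norm_sub_rev])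

lemma subIso_apply {d : ℕ} (p x : Euc d) : subIso p x = p - x := rfl

/-- The map `y ↦ p - g y` as an isometric equivalence. -/
def copyMap {d : ℕ} (p : Euc d) (g : Euc d ≃ᵢ Euc d) : Euc d ≃ᵢ Euc d :=
  g.trans (subIso p)

lemma copyMap_apply {d : ℕ} (p : Euc d) (g : Euc d ≃ᵢ Euc d) (y : Euc d) :
    copyMap p g y = p - g y := rfl

lemma copySet_eq {d : ℕ} (p : Euc d) (g : Euc d ≃ᵢ Euc d) (K : Set (Euc d)) :
    {x : Euc d | p - x ∈ g '' K} = copyMap p g '' K := by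
  ext x
  simp only [Set.mem_setOf_eq, Set.mem_image, copyMap_apply]
  constructor
  · rintro ⟨y, hy, hgy⟩
    exact ⟨y, hy, by rw [hgy]; abel⟩
  · rintro ⟨y, hy, hxy⟩
    exact ⟨y, hy, by rw [← hxy]; abel⟩

lemma kmeas_copy {d : ℕ} (s : ℝ) (p : Euc d) (g : Euc d ≃ᵢ Euc d) {K : Set (Euc d)}
    (hK : IsCompact K) :
    (kmeas d s) {x : Euc d | p - x ∈ g '' K} = ∫⁻ y in K, rho d s (p - g y) ∂volume := by
  rw [copySet_eq]
  have hmeas : MeasurableSet (copyMap p g '' K) :=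
    (hK.image (copyMap p g).continuous).measurableSet
  rw [kmeas, withDensity_apply _ hmeas]
  rw [← MeasurePreserving.setLIntegral_comp_emb (isomEquiv_measurePreserving (copyMap p g))
    ((copyMap p g).toHomeomorph.measurableEmbedding) (rho d s) K]
  rfl


lemma rho_comp_measurable {d : ℕ} (s : ℝ) (p : Euc d) (g : Euc d ≃ᵢ Euc d) :
    Measurable (fun y : Euc d => rho d s (p - g y)) := by
  apply (rho_continuous s).measurable.comp
  exact (continuous_const.sub g.continuous).measurable

/-- Key comparison: if `g` and `h` stay within distance `L` on `K`, then the two integrals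
compare up to a factor `exp (s * L)`. -/
lemma integral_compare {d : ℕ} {s : ℝ} (hs : 0 ≤ s) {L : ℝ} (p : Euc d)
    (g h : Euc d ≃ᵢ Euc d) (K : Set (Euc d))
    (hdist : ∀ y ∈ K, dist (g y) (h y) ≤ L) :
    ∫⁻ y in K, rho d s (p - g y) ∂volume ≤
      ENNReal.ofReal (Real.exp (s * L)) * ∫⁻ y in K, rho d s (p - h y) ∂volume := by
  rw [← lintegral_const_mul' _ _ ENNReal.ofReal_ne_top]
  apply setLIntegral_mono
  · exact (measurable_const.mul (rho_comp_measurable s p h))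
  · intro y hy
    rw [rho, rho, ← ENNReal.ofReal_mul (Real.exp_pos _).le, ← Real.exp_add]
    apply ENNReal.ofReal_le_ofReal
    apply Real.exp_le_exp.2
    have htri := dist_triangle p (g y) (h y)
    simp only [dist_eq_norm] at htri
    have hd := hdist y hy
    rw [dist_eq_norm] at hd
    nlinarith [mul_le_mul_of_nonneg_left
      (show ‖p - h y‖ - ‖p - g y‖ ≤ L by linarith) hs]

lemma integral_pos {d : ℕ} {s : ℝ} (hs : 0 ≤ s) (p : Euc d) (g : Euc d ≃ᵢ Euc d)
    {K : Set (Euc d)} (hK : IsCompact K) (hvol : 0 < volume K) :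
    0 < ∫⁻ y in K, rho d s (p - g y) ∂volume := by
  obtain ⟨r, hr⟩ := (hK.image g.continuous).isBounded.subset_closedBall 0
  have hbound : ∀ y ∈ K, ENNReal.ofReal (Real.exp (-(s * (‖p‖ + r)))) ≤ rho d s (p - g y) := by
    intro y hy
    have hgy : ‖g y‖ ≤ r := by
      have := hr (Set.mem_image_of_mem g hy)
      rwa [Metric.mem_closedBall, dist_zero_right] at this
    have h1 : ‖p - g y‖ ≤ ‖p‖ + r := le_trans (norm_sub_le p (g y)) (by linarith)
    apply ENNReal.ofReal_le_ofReal
    apply Real.exp_le_exp.2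
    nlinarith
  calc (0 : ℝ≥0∞) < ENNReal.ofReal (Real.exp (-(s * (‖p‖ + r)))) * volume K := by
        apply ENNReal.mul_pos
        · exact (ENNReal.ofReal_pos.2 (Real.exp_pos _)).ne'
        · exact hvol.ne'
    _ = ∫⁻ _ in K, ENNReal.ofReal (Real.exp (-(s * (‖p‖ + r)))) ∂volume :=
        (setLIntegral_const _ _).symm
    _ ≤ ∫⁻ y in K, rho d s (p - g y) ∂volume :=
        setLIntegral_mono (rho_comp_measurable s p g) hbound

lemma integral_le_vol {d : ℕ} {s : ℝ} (hs : 0 ≤ s) (p : Euc d) (g : Euc d ≃ᵢ Euc d)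
    (K : Set (Euc d)) :
    ∫⁻ y in K, rho d s (p - g y) ∂volume ≤ volume K := by
  calc ∫⁻ y in K, rho d s (p - g y) ∂volume ≤ ∫⁻ _ in K, (1 : ℝ≥0∞) ∂volume :=
        setLIntegral_mono measurable_const (fun y _ => rho_le_one hs _)
    _ = volume K := by rw [setLIntegral_const, one_mul]

set_option maxHeartbeats 1000000 in
/-- The measure `kmeas d s` is finite for `s > 0`. -/
lemma kmeas_finite {d : ℕ} {s : ℝ} (hs : 0 < s) : IsFiniteMeasure (kmeas d s) := by
  constructor
  rcases subsingleton_or_nontrivial (Euc d) with hsub | hnt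
  · have huniv : (Set.univ : Set (Euc d)) = {0} := Set.eq_singleton_iff_unique_mem.2
      ⟨Set.mem_univ 0, fun x _ => Subsingleton.elim x 0⟩
    calc (kmeas d s) Set.univ ≤ volume (Set.univ : Set (Euc d)) := by
          rw [kmeas, withDensity_apply _ MeasurableSet.univ]
          calc ∫⁻ x in Set.univ, rho d s x ∂volume ≤ ∫⁻ _ in Set.univ, (1:ℝ≥0∞) ∂volume :=
              setLIntegral_mono measurable_const (fun y _ => rho_le_one hs.le _)
            _ = volume (Set.univ : Set (Euc d)) := by rw [setLIntegral_const, one_mul]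
      _ < ∞ := by
          rw [huniv]
          exact (isCompact_singleton).measure_lt_top
  · -- annuli decomposition
    have hcover : (Set.univ : Set (Euc d)) ⊆
        ⋃ m : ℕ, (Metric.ball 0 (m+1) \ Metric.ball 0 m) := by
      intro x _
      refine Set.mem_iUnion.2 ⟨⌊‖x‖⌋₊, ?_, ?_⟩
      · rw [mem_ball_zero_iff]
        exact_mod_cast Nat.lt_floor_add_one ‖x‖
      · rw [mem_ball_zero_iff]
        push_neg
        exact Nat.floor_le (norm_nonneg x)
    have hball : ∀ m : ℕ, (kmeas d s) (Metric.ball 0 (m+1) \ Metric.ball 0 m) ≤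
        ENNReal.ofReal (Real.exp (-(s * m))) * volume (Metric.ball (0 : Euc d) (m+1)) := by
      intro m
      have hmeas : MeasurableSet (Metric.ball (0:Euc d) (m+1) \ Metric.ball 0 m) :=
        measurableSet_ball.diff measurableSet_ball
      rw [kmeas, withDensity_apply _ hmeas]
      calc ∫⁻ x in Metric.ball 0 (m+1) \ Metric.ball 0 m, rho d s x ∂volume
          ≤ ∫⁻ _ in Metric.ball (0:Euc d) (m+1) \ Metric.ball 0 m,
              ENNReal.ofReal (Real.exp (-(s * m))) ∂volume := by
            apply setLIntegral_mono measurable_const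
            intro x hx
            apply ENNReal.ofReal_le_ofReal
            apply Real.exp_le_exp.2
            have : (m : ℝ) ≤ ‖x‖ := by
              have := hx.2
              rwa [mem_ball_zero_iff, not_lt] at this
            nlinarith
        _ = ENNReal.ofReal (Real.exp (-(s * m))) *
              volume (Metric.ball (0:Euc d) (m+1) \ Metric.ball 0 m) := setLIntegral_const _ _
        _ ≤ ENNReal.ofReal (Real.exp (-(s * m))) * volume (Metric.ball (0 : Euc d) (m+1)) := by
            apply mul_le_mul_right
            exact measure_mono Set.diff_subset
    have hvol : ∀ m : ℕ, volume (Metric.ball (0 : Euc d) (m+1)) =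
        ENNReal.ofReal ((m+1 : ℝ) ^ (Module.finrank ℝ (Euc d))) *
          volume (Metric.ball (0 : Euc d) 1) := by
      intro m
      exact Measure.addHaar_ball volume 0 (by positivity)
    calc (kmeas d s) Set.univ
        ≤ (kmeas d s) (⋃ m : ℕ, (Metric.ball 0 (m+1) \ Metric.ball 0 m)) := measure_mono hcover
      _ ≤ ∑' m : ℕ, (kmeas d s) (Metric.ball 0 (m+1) \ Metric.ball 0 m) := measure_iUnion_le _
      _ ≤ ∑' m : ℕ, (ENNReal.ofReal (Real.exp (-(s * m)) *
            ((m+1 : ℝ) ^ (Module.finrank ℝ (Euc d))))) *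
              volume (Metric.ball (0 : Euc d) 1) := by
          apply ENNReal.tsum_le_tsum
          intro m
          calc (kmeas d s) (Metric.ball 0 (m+1) \ Metric.ball 0 m)
              ≤ ENNReal.ofReal (Real.exp (-(s * m))) * volume (Metric.ball (0 : Euc d) (m+1)) :=
                hball m
            _ = _ := by
                rw [hvol m, ← mul_assoc, ← ENNReal.ofReal_mul (Real.exp_pos _).le]
      _ = (∑' m : ℕ, ENNReal.ofReal (Real.exp (-(s * m)) *
              ((m+1 : ℝ) ^ (Module.finrank ℝ (Euc d))))) *
            volume (Metric.ball (0 : Euc d) 1) := ENNReal.tsum_mul_right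
      _ < ∞ := by
          apply ENNReal.mul_lt_top
          · set dd := Module.finrank ℝ (Euc d) with hdd
            have hr0 : (0:ℝ) < Real.exp (-s) := Real.exp_pos _
            have hr1 : Real.exp (-s) < 1 := by
              rw [Real.exp_lt_one_iff]; linarith
            have hgeom : Summable (fun m : ℕ => (m:ℝ) ^ dd * (Real.exp (-s)) ^ m) :=
              summable_pow_mul_geometric_of_norm_lt_one dd
                (by rw [Real.norm_eq_abs, abs_of_pos hr0]; exact hr1)
            have hshift : Summable (fun m : ℕ => ((m+1:ℕ):ℝ) ^ dd * (Real.exp (-s)) ^ (m+1)) :=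
              (summable_nat_add_iff (f := fun m : ℕ => (m:ℝ) ^ dd * (Real.exp (-s)) ^ m) 1).2
                hgeom
            have h2 : Summable (fun m : ℕ => ((m:ℝ)+1) ^ dd * (Real.exp (-s)) ^ m) := by
              refine (hshift.mul_left (Real.exp (-s))⁻¹).congr (fun m => ?_)
              push_cast
              rw [pow_succ]
              field_simp
            have hsummable : Summable (fun m : ℕ =>
                Real.exp (-(s * m)) * ((m+1 : ℝ) ^ dd)) := by
              refine h2.congr (fun m => ?_)
              have hexp : Real.exp (-(s * m)) = (Real.exp (-s)) ^ m := by
                rw [← Real.exp_nat_mul]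
                congr 1
                ring
              rw [hexp]
              ring
            rw [← ENNReal.ofReal_tsum_of_nonneg (fun m => by positivity) hsummable]
            exact ENNReal.ofReal_lt_top
          · exact measure_ball_lt_top


lemma rho_le_mul {d : ℕ} {s : ℝ} (hs : 0 ≤ s) {L : ℝ} {x x' : Euc d}
    (h : ‖x'‖ - L ≤ ‖x‖) :
    rho d s x ≤ ENNReal.ofReal (Real.exp (s * L)) * rho d s x' := by
  rw [rho, rho, ← ENNReal.ofReal_mul (Real.exp_pos _).le, ← Real.exp_add]
  apply ENNReal.ofReal_le_ofReal
  apply Real.exp_le_exp.2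
  nlinarith [mul_le_mul_of_nonneg_left h hs]

lemma mul_rho_le {d : ℕ} {s : ℝ} (hs : 0 ≤ s) {L : ℝ} {x x' : Euc d}
    (h : ‖x‖ ≤ ‖x'‖ + L) :
    ENNReal.ofReal (Real.exp (-(s * L))) * rho d s x' ≤ rho d s x := by
  rw [rho, rho, ← ENNReal.ofReal_mul (Real.exp_pos _).le, ← Real.exp_add]
  apply ENNReal.ofReal_le_ofReal
  apply Real.exp_le_exp.2
  nlinarith [mul_le_mul_of_nonneg_left h hs]

lemma body_vol_pos {d : ℕ} {K : Set (Euc d)} (hK : IsBody K) (hne : K.Nonempty) :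
    0 < volume (interior K) := by
  have hint : (interior K).Nonempty := by
    by_contra h
    rw [Set.not_nonempty_iff_eq_empty] at h
    obtain ⟨x, hx⟩ := hne
    rw [hK.2, h, closure_empty] at hx
    exact hx
  exact isOpen_interior.measure_pos volume hint

lemma dist_psub {d : ℕ} (p u v : Euc d) : dist (p - u) (p - v) = dist u v :=
  (subIso p).dist_eq u v

lemma kmeas_copy_interior {d : ℕ} (s : ℝ) (p : Euc d) (g : Euc d ≃ᵢ Euc d) (K : Set (Euc d)) :
    (kmeas d s) (interior {x : Euc d | p - x ∈ g '' K})
      = ∫⁻ y in interior K, rho d s (p - g y) ∂volume := by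
  have h1 : interior {x : Euc d | p - x ∈ g '' K} = copyMap p g '' interior K := by
    rw [copySet_eq]
    exact ((copyMap p g).toHomeomorph.image_interior K).symm
  have hm : MeasurableSet (⇑(copyMap p g) '' interior K) :=
    ((copyMap p g).toHomeomorph.measurableEmbedding).measurableSet_image'
      measurableSet_interior
  rw [h1, kmeas, withDensity_apply _ hm,
    ← MeasurePreserving.setLIntegral_comp_emb (isomEquiv_measurePreserving (copyMap p g))
      ((copyMap p g).toHomeomorph.measurableEmbedding) (rho d s) (interior K)]
  rfl

lemma copySet_preimage {d : ℕ} (p : Euc d) (D : Set (Euc d)) :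
    {x : Euc d | p - x ∈ D} = (subIso p).toHomeomorph ⁻¹' D := rfl

/-- The diffusion of any packing of a nonempty body is finite everywhere. -/
lemma diffuse_lt_top {d : ℕ} {s : ℝ} (hs : 0 < s) {K : Set (Euc d)} (hK : IsBody K)
    (hne : K.Nonempty) {P : Set (Set (Euc d))} (hP : IsPacking K P) (p : Euc d) :
    diffuse (kmeas d s) P p < ∞ := by
  obtain ⟨y₀, hy₀⟩ := hne
  set c₀ := Metric.diam K with hc₀
  set w := volume (interior K) with hwdef
  have hwpos : 0 < w := body_vol_pos hK ⟨y₀, hy₀⟩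
  have hVtop : volume K < ∞ := hK.1.measure_lt_top
  haveI := kmeas_finite (d := d) hs
  have key : ∀ D ∈ P,
      (kmeas d s) {x : Euc d | p - x ∈ D} * (ENNReal.ofReal (Real.exp (-(s * c₀))) * w) ≤
      (ENNReal.ofReal (Real.exp (s * c₀)) * volume K) *
        (kmeas d s) (interior {x : Euc d | p - x ∈ D}) := by
    intro D hD
    obtain ⟨g, hg⟩ := hP.1 D hD
    subst hg
    set a := rho d s (p - g y₀) with ha
    have hdb : ∀ y ∈ K, |‖p - g y‖ - ‖p - g y₀‖| ≤ c₀ := by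
      intro y hy
      have h1 : dist (p - g y) (p - g y₀) = dist y y₀ := by
        rw [dist_psub, g.dist_eq]
      have h2 : dist y y₀ ≤ c₀ := Metric.dist_le_diam_of_mem hK.1.isBounded hy hy₀
      calc |‖p - g y‖ - ‖p - g y₀‖| ≤ ‖(p - g y) - (p - g y₀)‖ := abs_norm_sub_norm_le _ _
        _ = dist (p - g y) (p - g y₀) := (dist_eq_norm _ _).symm
        _ ≤ c₀ := by rw [h1]; exact h2
    have hup : (kmeas d s) {x : Euc d | p - x ∈ g '' K} ≤
        (ENNReal.ofReal (Real.exp (s * c₀)) * a) * volume K := by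
      rw [kmeas_copy s p g hK.1]
      calc ∫⁻ y in K, rho d s (p - g y) ∂volume
          ≤ ∫⁻ _ in K, (ENNReal.ofReal (Real.exp (s * c₀)) * a) ∂volume := by
            apply setLIntegral_mono measurable_const
            intro y hy
            apply rho_le_mul hs.le
            have := hdb y hy
            rw [abs_le] at this
            linarith [this.2]
        _ = _ := by rw [setLIntegral_const]
    have hlow : (ENNReal.ofReal (Real.exp (-(s * c₀))) * a) * w ≤
        (kmeas d s) (interior {x : Euc d | p - x ∈ g '' K}) := by
      rw [kmeas_copy_interior s p g K]
      calc (ENNReal.ofReal (Real.exp (-(s * c₀))) * a) * w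
          = ∫⁻ _ in interior K, (ENNReal.ofReal (Real.exp (-(s * c₀))) * a) ∂volume := by
            rw [setLIntegral_const]
        _ ≤ ∫⁻ y in interior K, rho d s (p - g y) ∂volume := by
            apply setLIntegral_mono (rho_comp_measurable s p g)
            intro y hy
            apply mul_rho_le hs.le
            have := hdb y (interior_subset hy)
            rw [abs_le] at this
            linarith [this.1]
    calc (kmeas d s) {x : Euc d | p - x ∈ g '' K} * (ENNReal.ofReal (Real.exp (-(s * c₀))) * w)
        ≤ ((ENNReal.ofReal (Real.exp (s * c₀)) * a) * volume K) *
            (ENNReal.ofReal (Real.exp (-(s * c₀))) * w) := mul_le_mul_left hup _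
      _ = (ENNReal.ofReal (Real.exp (s * c₀)) * volume K) *
            ((ENNReal.ofReal (Real.exp (-(s * c₀))) * a) * w) := by ring
      _ ≤ (ENNReal.ofReal (Real.exp (s * c₀)) * volume K) *
            (kmeas d s) (interior {x : Euc d | p - x ∈ g '' K}) := mul_le_mul_right hlow _
  have hsum_int : ∑' (D : P), (kmeas d s) (interior {x : Euc d | p - x ∈ (D : Set (Euc d))}) ≤
      (kmeas d s) Set.univ := by
    rw [ENNReal.tsum_eq_iSup_sum]
    apply iSup_le
    intro T
    have hpd : (↑T : Set ↥P).PairwiseDisjoint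
        (fun D : ↥P => interior {x : Euc d | p - x ∈ (D : Set (Euc d))}) := by
      intro A hA B hB hAB
      have hne' : (A : Set (Euc d)) ≠ (B : Set (Euc d)) := Subtype.coe_injective.ne hAB
      have hdisj := hP.2 A.2 B.2 hne'
      simp only [Function.onFun]
      rw [copySet_preimage p (A : Set (Euc d)), copySet_preimage p (B : Set (Euc d)),
        ← (subIso p).toHomeomorph.preimage_interior, ← (subIso p).toHomeomorph.preimage_interior]
      exact Disjoint.preimage _ (Set.disjoint_iff_inter_eq_empty.2 hdisj)
    rw [← measure_biUnion_finset hpd (fun D _ => isOpen_interior.measurableSet)]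
    exact measure_mono (Set.subset_univ _)
  have hmul : (diffuse (kmeas d s) P p) * (ENNReal.ofReal (Real.exp (-(s * c₀))) * w) ≤
      (ENNReal.ofReal (Real.exp (s * c₀)) * volume K) * ((kmeas d s) Set.univ) := by
    rw [diffuse, ← ENNReal.tsum_mul_right]
    calc ∑' (D : P), (kmeas d s) {x : Euc d | p - x ∈ (D : Set (Euc d))} *
            (ENNReal.ofReal (Real.exp (-(s * c₀))) * w)
        ≤ ∑' (D : P), (ENNReal.ofReal (Real.exp (s * c₀)) * volume K) *
            (kmeas d s) (interior {x : Euc d | p - x ∈ (D : Set (Euc d))}) :=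
          ENNReal.tsum_le_tsum (fun D => key D D.2)
      _ = (ENNReal.ofReal (Real.exp (s * c₀)) * volume K) *
            ∑' (D : P), (kmeas d s) (interior {x : Euc d | p - x ∈ (D : Set (Euc d))}) :=
          ENNReal.tsum_mul_left
      _ ≤ _ := mul_le_mul_right hsum_int _
  by_contra hcon
  have htop : diffuse (kmeas d s) P p = ∞ := by
    rw [not_lt, top_le_iff] at hcon
    exact hcon
  rw [htop] at hmul
  have h0 : (ENNReal.ofReal (Real.exp (-(s * c₀))) * w) ≠ 0 :=
    mul_ne_zero (ENNReal.ofReal_pos.2 (Real.exp_pos _)).ne' hwpos.ne'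
  rw [ENNReal.top_mul h0] at hmul
  have hfin : (ENNReal.ofReal (Real.exp (s * c₀)) * volume K) * ((kmeas d s) Set.univ) < ∞ :=
    ENNReal.mul_lt_top (ENNReal.mul_lt_top ENNReal.ofReal_lt_top hVtop) (measure_lt_top _ _)
  exact absurd (lt_of_le_of_lt hmul hfin) (lt_irrefl _)

lemma exists_good_s (n : ℕ) (hn : 0 < n) (L : ℝ) (hL : 0 < L) :
    ∃ s : ℝ, 0 < s ∧ ∀ k : ℕ, k < n →
      (k : ℝ) * Real.exp (s * L) < (k + 1 : ℝ) * Real.exp (-(s * L)) := by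
  have hn' : (0:ℝ) < n := by exact_mod_cast hn
  have hq : (1:ℝ) < ((n:ℝ)+1)/n := by
    rw [lt_div_iff₀ hn']
    linarith
  refine ⟨Real.log (((n:ℝ)+1)/n) / (2*L), div_pos (Real.log_pos hq) (by linarith), ?_⟩
  intro k hk
  have hk' : (k:ℝ) < n := by exact_mod_cast hk
  have hk0 : (0:ℝ) ≤ k := Nat.cast_nonneg k
  set s := Real.log (((n:ℝ)+1)/n) / (2*L) with hsdef
  have hsL : s * L = Real.log (((n:ℝ)+1)/n) / 2 := by
    rw [hsdef]
    field_simp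
  set e := Real.exp (s * L) with hedef
  have he0 : 0 < e := Real.exp_pos _
  have he2 : e * e = ((n:ℝ)+1)/n := by
    rw [hedef, ← Real.exp_add]
    have harg : s * L + s * L = Real.log (((n:ℝ)+1)/n) := by
      rw [hsL]; ring
    rw [harg, Real.exp_log (by positivity)]
  have hkey : (k:ℝ) * (((n:ℝ)+1)/n) < k + 1 := by
    rw [mul_div_assoc' ,div_lt_iff₀ hn']
    nlinarith
  have h3 : (k:ℝ) * e * e < k + 1 := by
    calc (k:ℝ) * e * e = (k:ℝ) * (e * e) := by ring
      _ = (k:ℝ) * (((n:ℝ)+1)/n) := by rw [he2]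
      _ < k + 1 := hkey
  rw [Real.exp_neg, ← hedef]
  rw [show ((k:ℝ) + 1) * e⁻¹ = ((k:ℝ)+1)/e by ring, lt_div_iff₀ he0]
  linarith

/-- One connected replacement step strictly increases the diffusion everywhere. -/
lemma conn_step_lt {d n : ℕ} {K : Set (Euc d)} (hK : IsBody K) {s L : ℝ} (hs : 0 < s)
    (hLge : ∀ m : ℕ, m ≤ 2 * n → (m : ℝ) * Metric.diam K ≤ L)
    (hnum : ∀ k : ℕ, k < n →
      (k : ℝ) * Real.exp (s * L) < (k + 1 : ℝ) * Real.exp (-(s * L)))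
    {B A : Set (Set (Euc d))} (hB : IsPacking K B) (hstep : ConnStep K n B A)
    (p : Euc d) : diffuse (kmeas d s) B p < diffuse (kmeas d s) A p := by
  obtain ⟨k, F, G, hk, hFB, hFcard, hGcard, hdisj, hAeq, hApack, hconn⟩ := hstep
  have hGne : G.Nonempty := Finset.card_pos.1 (by omega)
  obtain ⟨E₀, hE₀G⟩ := hGne
  have hGA : (↑G : Set (Set (Euc d))) ⊆ A := by rw [hAeq]; exact Set.subset_union_right
  have hcopyG : ∀ E ∈ G, IsIsomCopy K E := fun E hE => hApack.1 E (hGA hE)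
  have hcopyF : ∀ D ∈ F, IsIsomCopy K D := fun D hD => hB.1 D (hFB hD)
  have hcopyFG : ∀ D ∈ F ∪ G, IsIsomCopy K D := by
    intro D hD
    rcases Finset.mem_union.1 hD with h | h
    exacts [hcopyF D h, hcopyG D h]
  have hKne : K.Nonempty := by
    by_contra hke
    rw [Set.not_nonempty_iff_eq_empty] at hke
    obtain ⟨z, hz⟩ := hconn.nonempty
    rw [Set.mem_iUnion₂] at hz
    obtain ⟨D, hD, hzD⟩ := hz
    have hcp : IsIsomCopy K D := by
      rcases hD with h | h
      · exact hcopyF D (Finset.mem_coe.1 h)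
      · exact hcopyG D (Finset.mem_coe.1 h)
    obtain ⟨f, hf⟩ := hcp
    rw [hf, hke, Set.image_empty] at hzD
    exact hzD
  set U := ⋃ D ∈ (↑F ∪ ↑G : Set (Set (Euc d))), D with hU
  have hcompFG : ∀ D ∈ F ∪ G, IsCompact D := by
    intro D hD
    obtain ⟨f, hf⟩ := hcopyFG D hD
    rw [hf]
    exact hK.1.image f.continuous
  have hdiamFG : ∀ D ∈ F ∪ G, Metric.diam D ≤ Metric.diam K := by
    intro D hD
    obtain ⟨f, hf⟩ := hcopyFG D hD
    rw [hf, f.isometry.diam_image]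
  have hUeq : ((F ∪ G : Finset (Set (Euc d))) : Set (Set (Euc d)))
      = (↑F ∪ ↑G : Set (Set (Euc d))) := Finset.coe_union F G
  have hdistU : ∀ x ∈ U, ∀ y ∈ U, dist x y ≤ L := by
    intro x hx y hy
    have hcard : (F ∪ G).card + 1 ≤ 2 * n := by
      have := Finset.card_union_le F G
      omega
    rw [hU, ← hUeq] at hx hy
    have hchain := chain_diam (F ∪ G) (Metric.diam K) Metric.diam_nonneg hcompFG hdiamFG
      (by rw [hUeq]; exact hconn.isPreconnected) x hx y hy
    calc dist x y ≤ ((F ∪ G).card + 1) * Metric.diam K := hchain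
      _ ≤ L := by
          have := hLge ((F ∪ G).card + 1) hcard
          push_cast at this
          linarith
  obtain ⟨h₀, hh₀⟩ := hcopyG E₀ hE₀G
  set I₀ := ∫⁻ y in K, rho d s (p - h₀ y) ∂volume with hI₀def
  have hI₀pos : 0 < I₀ :=
    integral_pos hs.le p h₀ hK.1
      (lt_of_lt_of_le (body_vol_pos hK hKne) (measure_mono interior_subset))
  have hI₀top : I₀ ≠ ∞ :=
    (lt_of_le_of_lt (integral_le_vol hs.le p h₀ K) hK.1.measure_lt_top).ne
  have hmemU : ∀ D ∈ F ∪ G, ∀ (f : Euc d ≃ᵢ Euc d), D = f '' K → ∀ y ∈ K, f y ∈ U := by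
    intro D hD f hf y hy
    rw [hU, ← hUeq]
    exact Set.mem_iUnion₂.2 ⟨D, Finset.mem_coe.2 hD, by rw [hf]; exact Set.mem_image_of_mem f hy⟩
  have hcompare : ∀ D ∈ F ∪ G, ∀ (f : Euc d ≃ᵢ Euc d), D = f '' K →
      (∫⁻ y in K, rho d s (p - f y) ∂volume ≤ ENNReal.ofReal (Real.exp (s * L)) * I₀ ∧
       ENNReal.ofReal (Real.exp (-(s * L))) * I₀ ≤ ∫⁻ y in K, rho d s (p - f y) ∂volume) := by
    intro D hD f hf
    have hdd : ∀ y ∈ K, dist (f y) (h₀ y) ≤ L := fun y hy =>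
      hdistU _ (hmemU D hD f hf y hy) _ (hmemU E₀ (Finset.mem_union_right F hE₀G) h₀ hh₀ y hy)
    constructor
    · exact integral_compare hs.le p f h₀ K hdd
    · have h1 : I₀ ≤ ENNReal.ofReal (Real.exp (s * L)) * ∫⁻ y in K, rho d s (p - f y) ∂volume :=
        integral_compare hs.le p h₀ f K (fun y hy => by rw [dist_comm]; exact hdd y hy)
      calc ENNReal.ofReal (Real.exp (-(s * L))) * I₀
          ≤ ENNReal.ofReal (Real.exp (-(s * L))) * (ENNReal.ofReal (Real.exp (s * L)) *
              ∫⁻ y in K, rho d s (p - f y) ∂volume) := mul_le_mul_right h1 _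
        _ = (ENNReal.ofReal (Real.exp (-(s * L)) * Real.exp (s * L))) *
              ∫⁻ y in K, rho d s (p - f y) ∂volume := by
            rw [← mul_assoc, ← ENNReal.ofReal_mul (Real.exp_pos _).le]
        _ = ∫⁻ y in K, rho d s (p - f y) ∂volume := by
            rw [← Real.exp_add, neg_add_cancel, Real.exp_zero, ENNReal.ofReal_one, one_mul]
  have hFsum : ∑ D ∈ F, (kmeas d s) {x : Euc d | p - x ∈ D} ≤
      (k : ℝ≥0∞) * (ENNReal.ofReal (Real.exp (s * L)) * I₀) := by
    calc ∑ D ∈ F, (kmeas d s) {x : Euc d | p - x ∈ D}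
        ≤ ∑ _D ∈ F, (ENNReal.ofReal (Real.exp (s * L)) * I₀) := by
          apply Finset.sum_le_sum
          intro D hD
          obtain ⟨f, hf⟩ := hcopyF D hD
          rw [hf, kmeas_copy s p f hK.1]
          exact (hcompare D (Finset.mem_union_left G hD) f hf).1
      _ = F.card • (ENNReal.ofReal (Real.exp (s * L)) * I₀) := Finset.sum_const _
      _ = (k : ℝ≥0∞) * (ENNReal.ofReal (Real.exp (s * L)) * I₀) := by
          rw [hFcard, nsmul_eq_mul]
  have hGsum : ((k : ℝ≥0∞) + 1) * (ENNReal.ofReal (Real.exp (-(s * L))) * I₀) ≤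
      ∑ E ∈ G, (kmeas d s) {x : Euc d | p - x ∈ E} := by
    calc ((k : ℝ≥0∞) + 1) * (ENNReal.ofReal (Real.exp (-(s * L))) * I₀)
        = G.card • (ENNReal.ofReal (Real.exp (-(s * L))) * I₀) := by
          rw [hGcard, nsmul_eq_mul]
          push_cast
          ring
      _ = ∑ _E ∈ G, (ENNReal.ofReal (Real.exp (-(s * L))) * I₀) := (Finset.sum_const _).symm
      _ ≤ ∑ E ∈ G, (kmeas d s) {x : Euc d | p - x ∈ E} := by
          apply Finset.sum_le_sum
          intro E hE
          obtain ⟨f, hf⟩ := hcopyG E hE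
          rw [hf, kmeas_copy s p f hK.1]
          exact (hcompare E (Finset.mem_union_right F hE) f hf).2
  have hmid : (k : ℝ≥0∞) * (ENNReal.ofReal (Real.exp (s * L)) * I₀) <
      ((k : ℝ≥0∞) + 1) * (ENNReal.ofReal (Real.exp (-(s * L))) * I₀) := by
    rw [← mul_assoc, ← mul_assoc]
    have ha : (k : ℝ≥0∞) * ENNReal.ofReal (Real.exp (s * L)) =
        ENNReal.ofReal ((k : ℝ) * Real.exp (s * L)) := by
      rw [ENNReal.ofReal_mul (Nat.cast_nonneg k), ENNReal.ofReal_natCast]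
    have hb : ((k : ℝ≥0∞) + 1) * ENNReal.ofReal (Real.exp (-(s * L))) =
        ENNReal.ofReal (((k : ℝ) + 1) * Real.exp (-(s * L))) := by
      rw [ENNReal.ofReal_mul (by positivity), ENNReal.ofReal_add (Nat.cast_nonneg k)
        zero_le_one, ENNReal.ofReal_natCast, ENNReal.ofReal_one]
    rw [ha, hb]
    apply ENNReal.mul_lt_mul_left hI₀pos.ne' hI₀top
    exact (ENNReal.ofReal_lt_ofReal_iff (by positivity)).2 (hnum k hk)
  have hFG : ∑ D ∈ F, (kmeas d s) {x : Euc d | p - x ∈ D} <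
      ∑ E ∈ G, (kmeas d s) {x : Euc d | p - x ∈ E} :=
    lt_of_le_of_lt hFsum (lt_of_lt_of_le hmid hGsum)
  have hBdec : diffuse (kmeas d s) B p =
      (∑' (D : ↥(B \ ↑F)), (kmeas d s) {x : Euc d | p - x ∈ (D : Set (Euc d))}) +
        ∑ D ∈ F, (kmeas d s) {x : Euc d | p - x ∈ D} := by
    rw [diffuse]
    calc ∑' (D : ↥B), (kmeas d s) {x : Euc d | p - x ∈ (D : Set (Euc d))}
        = ∑' (D : ↥((B \ ↑F) ∪ ↑F)), (kmeas d s) {x : Euc d | p - x ∈ (D : Set (Euc d))} := by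
          rw [Set.diff_union_of_subset hFB]
      _ = (∑' (D : ↥(B \ ↑F)), (kmeas d s) {x : Euc d | p - x ∈ (D : Set (Euc d))}) +
            ∑' (D : ↥(↑F : Set (Set (Euc d)))),
              (kmeas d s) {x : Euc d | p - x ∈ (D : Set (Euc d))} :=
          ENNReal.summable.tsum_union_disjoint (f := fun D : Set (Euc d) => (kmeas d s) {x : Euc d | p - x ∈ D})
            Set.disjoint_sdiff_left ENNReal.summable
      _ = _ := congrArg (fun t => (∑' (D : ↥(B \ ↑F)),
            (kmeas d s) {x : Euc d | p - x ∈ (D : Set (Euc d))}) + t)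
          (Finset.tsum_subtype' F (fun D => (kmeas d s) {x : Euc d | p - x ∈ D}))
  have hAdec : diffuse (kmeas d s) A p =
      (∑' (D : ↥(B \ ↑F)), (kmeas d s) {x : Euc d | p - x ∈ (D : Set (Euc d))}) +
        ∑ E ∈ G, (kmeas d s) {x : Euc d | p - x ∈ E} := by
    rw [diffuse]
    calc ∑' (D : ↥A), (kmeas d s) {x : Euc d | p - x ∈ (D : Set (Euc d))}
        = ∑' (D : ↥((B \ ↑F) ∪ ↑G)), (kmeas d s) {x : Euc d | p - x ∈ (D : Set (Euc d))} := by
          rw [hAeq]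
      _ = (∑' (D : ↥(B \ ↑F)), (kmeas d s) {x : Euc d | p - x ∈ (D : Set (Euc d))}) +
            ∑' (D : ↥(↑G : Set (Set (Euc d)))),
              (kmeas d s) {x : Euc d | p - x ∈ (D : Set (Euc d))} :=
          ENNReal.summable.tsum_union_disjoint (f := fun D : Set (Euc d) => (kmeas d s) {x : Euc d | p - x ∈ D})
            hdisj.symm ENNReal.summable
      _ = _ := congrArg (fun t => (∑' (D : ↥(B \ ↑F)),
            (kmeas d s) {x : Euc d | p - x ∈ (D : Set (Euc d))}) + t)
          (Finset.tsum_subtype' G (fun D => (kmeas d s) {x : Euc d | p - x ∈ D}))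
  have hrest : (∑' (D : ↥(B \ ↑F)), (kmeas d s) {x : Euc d | p - x ∈ (D : Set (Euc d))}) ≠ ∞ := by
    have hle : (∑' (D : ↥(B \ ↑F)), (kmeas d s) {x : Euc d | p - x ∈ (D : Set (Euc d))}) ≤
        diffuse (kmeas d s) B p := by
      rw [hBdec]
      exact le_self_add
    exact (lt_of_le_of_lt hle (diffuse_lt_top hs hK hKne hB p)).ne
  rw [hBdec, hAdec]
  exact ENNReal.add_lt_add_left hrest hFG

/-- For every positive `n` and every body `K ⊂ ℝ^d` there is a
finite Borel measure `μ` such that whenever packings `A ≽_{C,n} B` of `K` with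
`A ≠ B`, the strict inequality `(μ * χ_A)(p) > (μ * χ_B)(p)` holds at every point. -/
theorem exists_measure_strictly_increasing_under_connected_replacement
    {d : ℕ} (n : ℕ) (hn : 0 < n) (K : Set (Euc d)) (hK : IsBody K) :
    ∃ μ : Measure (Euc d), IsFiniteMeasure μ ∧
      ∀ A B : Set (Set (Euc d)), IsPacking K A → IsPacking K B →
        ConnGE K n A B → A ≠ B → ∀ p : Euc d, diffuse μ B p < diffuse μ A p := by
  set c₀ := Metric.diam K with hc₀
  set L := (2 * n : ℝ) * (c₀ + 1) with hLdef
  have hdiam : (0:ℝ) ≤ c₀ := Metric.diam_nonneg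
  have hLpos : 0 < L := by
    have hn' : (0:ℝ) < n := by exact_mod_cast hn
    rw [hLdef]
    nlinarith
  obtain ⟨s, hs, hnum⟩ := exists_good_s n hn L hLpos
  haveI := kmeas_finite (d := d) hs
  refine ⟨kmeas d s, inferInstance, ?_⟩
  intro A B hA hB hGE hne p
  have hLge : ∀ m : ℕ, m ≤ 2 * n → (m : ℝ) * Metric.diam K ≤ L := by
    intro m hm
    have h1 : (m:ℝ) ≤ 2 * n := by exact_mod_cast hm
    rw [hLdef]
    nlinarith
  have key : ∀ A', Relation.ReflTransGen (ConnStep K n) B A' →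
      A' = B ∨ (IsPacking K A' ∧ ∀ q : Euc d,
        diffuse (kmeas d s) B q < diffuse (kmeas d s) A' q) := by
    intro A' h
    induction h with
    | refl => exact Or.inl rfl
    | @tail C A'' hBC hstep ih =>
      right
      have hCpack : IsPacking K C := by
        rcases ih with rfl | ⟨hc, _⟩
        · exact hB
        · exact hc
      have hApack : IsPacking K A'' := by
        obtain ⟨_, _, _, _, _, _, _, _, _, hp, _⟩ := hstep
        exact hp
      refine ⟨hApack, fun q => ?_⟩
      have hstep_lt := conn_step_lt hK hs hLge hnum hCpack hstep q
      rcases ih with rfl | ⟨_, hlt⟩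
      · exact hstep_lt
      · exact lt_trans (hlt q) hstep_lt
  rcases key A hGE with rfl | ⟨_, hlt⟩
  · exact absurd rfl hne
  · exact hlt p
end
end

section
/- Let K be a body in ℝ^d and n a positive integer. If a sequence of packings P_1 ≼_{C,n} P_2 ≼_{C,n} P_3 ≼_{C,n} … of K increases under the connected n-saturation ordering, then for every bounded region R ⊂ ℝ^d the sequence is eventually constant in R: only finitely many of the replacement steps involve copies of K meeting R. -/
open MeasureTheory Metric Filter Pointwise
open scoped ENNReal NNReal

noncomputable section

namespace AuxICC

variable {d : ℕ}



variable {d : ℕ}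

def wt (c : ℝ) (x : Euc d) : ℝ≥0∞ := ENNReal.ofReal (Real.exp (-(c * ‖x‖)))

def mu (d : ℕ) (c : ℝ) : Measure (Euc d) := volume.withDensity (fun x => wt c x)

def mass (d : ℕ) (c : ℝ) (P : Set (Set (Euc d))) : ℝ≥0∞ :=
  ∑' D : P, mu d c (interior (D : Set (Euc d)))

lemma wt_measurable (c : ℝ) : Measurable (fun x : Euc d => wt c x) := by
  apply Measurable.ennreal_ofReal
  exact Real.measurable_exp.comp ((measurable_norm.const_mul c).neg)

lemma wt_ratio {c L : ℝ} (hc : 0 ≤ c) {x y : Euc d} (h : dist x y ≤ L) :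
    ENNReal.ofReal (Real.exp (-(c * L))) * wt c y ≤ wt c x := by
  rw [wt, wt, ← ENNReal.ofReal_mul (Real.exp_nonneg _), ← Real.exp_add]
  apply ENNReal.ofReal_le_ofReal
  apply Real.exp_le_exp.mpr
  have hxy : ‖x‖ ≤ ‖y‖ + L := by
    calc ‖x‖ = dist x 0 := (dist_zero_right x).symm
    _ ≤ dist x y + dist y 0 := dist_triangle _ _ _
    _ ≤ L + ‖y‖ := by rw [dist_zero_right]; linarith
    _ = ‖y‖ + L := by ring
  nlinarith [mul_le_mul_of_nonneg_left hxy hc]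

lemma vol_image (f : Euc d ≃ᵢ Euc d) {s : Set (Euc d)} (hs : MeasurableSet s) :
    volume (f '' s) = volume s := by
  set g := f.toRealLinearIsometryEquiv with hg
  have hfx : ∀ x, f x = g x + f 0 := fun x => by
    rw [hg, IsometryEquiv.toRealLinearIsometryEquiv_apply]; abel
  have hgs : ⇑g '' s = ⇑g.symm ⁻¹' s := by
    ext y
    constructor
    · rintro ⟨x, hx, rfl⟩; simpa using hx
    · intro h; exact ⟨g.symm y, h, g.apply_symm_apply y⟩
  have hgs_meas : MeasurableSet (⇑g '' s) := by
    rw [hgs]; exact g.symm.continuous.measurable hs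
  have h1 : f '' s = (fun y => y + f 0) '' (⇑g '' s) := by
    rw [Set.image_image]
    exact Set.image_congr fun x _ => hfx x
  have h2 : (fun y => y + f 0) '' (⇑g '' s) = (fun y => y + (-(f 0))) ⁻¹' (⇑g '' s) := by
    ext y
    constructor
    · rintro ⟨x, hx, rfl⟩
      simpa using hx
    · intro h
      exact ⟨y + -f 0, h, neg_add_cancel_right y (f 0)⟩
  rw [h1, h2,
    (measurePreserving_add_right volume (-(f 0))).measure_preimage hgs_meas.nullMeasurableSet,
    hgs, g.symm.measurePreserving.measure_preimage hs.nullMeasurableSet]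

lemma copy_interior_vol {K D : Set (Euc d)} (h : ∃ f : Euc d ≃ᵢ Euc d, D = f '' K) :
    volume (interior D) = volume (interior K) := by
  obtain ⟨f, rfl⟩ := h
  have : interior (f '' K) = f '' interior K := by
    have h2 := f.toHomeomorph.image_interior K
    simpa using h2.symm
  rw [this, vol_image f isOpen_interior.measurableSet]

lemma copy_compact {K D : Set (Euc d)} (hK : IsCompact K)
    (h : ∃ f : Euc d ≃ᵢ Euc d, D = f '' K) : IsCompact D := by
  obtain ⟨f, rfl⟩ := h
  exact hK.image f.continuous

lemma copy_diam {K D : Set (Euc d)} (h : ∃ f : Euc d ≃ᵢ Euc d, D = f '' K) :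
    Metric.diam D = Metric.diam K := by
  obtain ⟨f, rfl⟩ := h
  exact f.isometry.diam_image K

lemma mu_univ_lt_top (d : ℕ) {c : ℝ} (hc : 0 < c) : mu d c Set.univ < ⊤ := by
  set r : ℝ := ((d + 1 : ℕ) : ℝ) with hrdef
  have hrr : ((Module.finrank ℝ (Euc d) : ℝ)) < r := by
    rw [finrank_euclideanSpace_fin, hrdef]; push_cast; linarith
  set m : ℝ := min 1 (c / ((d : ℝ) + 1)) with hm
  have hm0 : 0 < m := lt_min one_pos (by positivity)
  have hkey : ∀ x : Euc d, Real.exp (-(c * ‖x‖)) ≤ (m ^ (d + 1))⁻¹ * (1 + ‖x‖) ^ (-r) := by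
    intro x
    have ht : 0 ≤ ‖x‖ := norm_nonneg x
    have h1t : (0 : ℝ) < 1 + ‖x‖ := by linarith
    have hd1 : (0 : ℝ) < (d : ℝ) + 1 := by positivity
    have hstep : m * (1 + ‖x‖) ≤ Real.exp (c * ‖x‖ / ((d : ℝ) + 1)) := by
      have h1 : m ≤ 1 := min_le_left _ _
      have h2 : m ≤ c / ((d : ℝ) + 1) := min_le_right _ _
      have h3 : m * (1 + ‖x‖) ≤ 1 + (c / ((d : ℝ) + 1)) * ‖x‖ := by nlinarith
      have h4 := Real.add_one_le_exp ((c / ((d : ℝ) + 1)) * ‖x‖)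
      have h5 : (c / ((d : ℝ) + 1)) * ‖x‖ = c * ‖x‖ / ((d : ℝ) + 1) := by ring
      rw [← h5]; linarith
    have hpow : (m * (1 + ‖x‖)) ^ (d + 1) ≤ Real.exp (c * ‖x‖) := by
      calc (m * (1 + ‖x‖)) ^ (d + 1)
          ≤ (Real.exp (c * ‖x‖ / ((d : ℝ) + 1))) ^ (d + 1) := by
            apply pow_le_pow_left₀ (by positivity) hstep
        _ = Real.exp (((d + 1 : ℕ) : ℝ) * (c * ‖x‖ / ((d : ℝ) + 1))) := by
            rw [Real.exp_nat_mul]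
        _ = Real.exp (c * ‖x‖) := by
            congr 1
            push_cast
            field_simp
    have hrpow : (1 + ‖x‖) ^ (-r) = ((1 + ‖x‖) ^ (d + 1))⁻¹ := by
      rw [Real.rpow_neg h1t.le, hrdef, Real.rpow_natCast]
    rw [Real.exp_neg, hrpow, ← mul_inv, ← mul_pow]
    exact inv_anti₀ (by positivity) hpow
  have hint : Integrable (fun x : Euc d => (m ^ (d + 1))⁻¹ * (1 + ‖x‖) ^ (-r)) volume :=
    (integrable_one_add_norm (μ := (volume : Measure (Euc d))) hrr).const_mul _
  have hfin := hint.lintegral_lt_top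
  rw [mu, withDensity_apply _ MeasurableSet.univ, Measure.restrict_univ]
  refine lt_of_le_of_lt (lintegral_mono fun x => ?_) hfin
  exact ENNReal.ofReal_le_ofReal (hkey x)


open Classical in
def nextF (S T : Finset (Set (Euc d))) : Finset (Set (Euc d)) :=
  S.filter (fun B => B ∈ T ∨ ∃ A ∈ T, (A ∩ B).Nonempty)

open Classical in
lemma mem_nextF {S T : Finset (Set (Euc d))} {B : Set (Euc d)} :
    B ∈ nextF S T ↔ B ∈ S ∧ (B ∈ T ∨ ∃ A ∈ T, (A ∩ B).Nonempty) := Finset.mem_filter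

lemma nextF_subset (S T : Finset (Set (Euc d))) : nextF S T ⊆ S := by
  classical
  exact Finset.filter_subset _ _

lemma chain_dist (S : Finset (Set (Euc d))) (δ : ℝ) (hδ : 0 ≤ δ)
    (hcpt : ∀ A ∈ S, IsCompact A)
    (hdiam : ∀ A ∈ S, Metric.diam A ≤ δ)
    (hconn : IsPreconnected (⋃ A ∈ (S : Set (Set (Euc d))), A)) :
    ∀ x ∈ ⋃ A ∈ (S : Set (Set (Euc d))), A, ∀ y ∈ ⋃ A ∈ (S : Set (Set (Euc d))), A,
      dist x y ≤ ((S.card : ℝ) + 1) * δ := by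
  classical
  intro x hx y hy
  obtain ⟨A₀, hA₀S, hxA₀⟩ := Set.mem_iUnion₂.mp hx
  have hA₀S' : A₀ ∈ S := hA₀S
  -- iterated reachability
  let reach : ℕ → Finset (Set (Euc d)) := fun m =>
    Nat.rec {A₀} (fun _ T => nextF S T) m
  have hreach0 : reach 0 = {A₀} := rfl
  have hreachS : ∀ m, reach (m + 1) = nextF S (reach m) := fun m => rfl
  have hsub : ∀ m, reach m ⊆ S := by
    intro m
    induction m with
    | zero => rw [hreach0]; simpa using hA₀S'
    | succ m ih => rw [hreachS]; exact nextF_subset _ _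
  have hmono : ∀ m, reach m ⊆ reach (m + 1) := by
    intro m B hB
    rw [hreachS]
    exact mem_nextF.mpr ⟨hsub m hB, Or.inl hB⟩
  have hmono' : ∀ m m', m ≤ m' → reach m ⊆ reach m' := by
    intro m m' h
    induction h with
    | refl => exact Finset.Subset.refl _
    | step h ih => exact ih.trans (hmono _)
  have hdist : ∀ m, ∀ B ∈ reach m, ∀ z ∈ B, dist x z ≤ ((m : ℝ) + 1) * δ := by
    intro m
    induction m with
    | zero =>
      intro B hB z hz
      rw [hreach0, Finset.mem_singleton] at hB
      subst hB
      have h1 : dist x z ≤ Metric.diam B := dist_le_diam_of_mem (hcpt B hA₀S').isBounded hxA₀ hz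
      have h2 := hdiam B hA₀S'
      push_cast
      linarith
    | succ m ih =>
      intro B hB z hz
      rw [hreachS, mem_nextF] at hB
      obtain ⟨hBS, hBm | ⟨A, hA, p, hpA, hpB⟩⟩ := hB
      · have := ih B hBm z hz
        have hle : ((m : ℝ) + 1) * δ ≤ ((m : ℝ) + 1 + 1) * δ := by nlinarith
        push_cast
        linarith
      · have h1 := ih A hA p hpA
        have h2 : dist p z ≤ Metric.diam B := dist_le_diam_of_mem (hcpt B hBS).isBounded hpB hz
        have h3 := hdiam B hBS
        have h4 := dist_triangle x p z
        push_cast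
        linarith
  -- stabilization
  have hfixstep : ∀ m, reach m = reach (m + 1) → ∀ m', m ≤ m' → reach m' = reach m := by
    intro m hfix m' hm
    induction hm with
    | refl => rfl
    | @step m'' h ih =>
      rw [hreachS m'', ih, ← hreachS m, ← hfix]
  have hexfix : ∃ m ≤ S.card, reach m = reach (m + 1) := by
    by_contra hne
    push_neg at hne
    have hgrow : ∀ m, m ≤ S.card → m + 1 ≤ (reach m).card := by
      intro m
      induction m with
      | zero => intro _; rw [hreach0]; simp
      | succ m ih =>
        intro hm
        have h1 : m ≤ S.card := Nat.le_of_succ_le hm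
        have h2 := ih h1
        have h3 : reach m ⊂ reach (m + 1) := ⟨hmono m, by
          intro hsub2
          exact hne m h1 (Finset.Subset.antisymm (hmono m) hsub2)⟩
        have := Finset.card_lt_card h3
        omega
    have h5 := hgrow S.card le_rfl
    have h6 := Finset.card_le_card (hsub S.card)
    omega
  obtain ⟨m₀, hm₀, hfix⟩ := hexfix
  obtain ⟨T, hT⟩ : ∃ T : Finset (Set (Euc d)), T = reach m₀ := ⟨reach m₀, rfl⟩
  have hTsub : T ⊆ S := hT ▸ hsub m₀
  have hclosed : ∀ B ∈ S, (∃ A ∈ T, (A ∩ B).Nonempty) → B ∈ T := by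
    intro B hBS h
    have h2 : B ∈ reach (m₀ + 1) := by
      rw [hreachS, ← hT]
      exact mem_nextF.mpr ⟨hBS, Or.inr h⟩
    rw [hT, hfix]
    exact h2
  have hA₀T : A₀ ∈ T := by
    rw [hT]
    exact hmono' 0 m₀ (Nat.zero_le _) (by rw [hreach0]; exact Finset.mem_singleton_self A₀)
  let U₁ : Set (Euc d) := ⋃ A ∈ ((T : Finset (Set (Euc d))) : Set (Set (Euc d))), A
  let U₂ : Set (Euc d) := ⋃ A ∈ ((S \ T : Finset (Set (Euc d))) : Set (Set (Euc d))), A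
  have hUsplit : (⋃ A ∈ (S : Set (Set (Euc d))), A) = U₁ ∪ U₂ := by
    show _ = (⋃ A ∈ ((T : Finset (Set (Euc d))) : Set (Set (Euc d))), A) ∪ _
    rw [← Set.biUnion_union, ← Finset.coe_union, Finset.union_sdiff_of_subset hTsub]
  have hdisjU : Disjoint U₁ U₂ := by
    rw [Set.disjoint_left]
    rintro z hz1 hz2
    obtain ⟨A, hAT, hzA⟩ := Set.mem_iUnion₂.mp hz1
    obtain ⟨B, hBST, hzB⟩ := Set.mem_iUnion₂.mp hz2
    have hBST' : B ∈ S \ T := hBST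
    rw [Finset.mem_sdiff] at hBST'
    exact hBST'.2 (hclosed B hBST'.1 ⟨A, hAT, z, hzA, hzB⟩)
  have hU₂e : U₂ = ∅ := by
    by_contra hne
    obtain ⟨y₂, hy₂⟩ := Set.nonempty_iff_ne_empty.mpr hne
    have hU₁c : IsCompact U₁ :=
      T.finite_toSet.isCompact_biUnion fun A hA => hcpt A (hTsub hA)
    have hU₂c : IsCompact U₂ :=
      (S \ T).finite_toSet.isCompact_biUnion fun A hA => hcpt A (Finset.mem_sdiff.mp hA).1
    obtain ⟨V₁, V₂, hV₁o, hV₂o, hU₁V, hU₂V, hVd⟩ :=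
      SeparatedNhds.of_isCompact_isCompact hU₁c hU₂c hdisjU
    have hxU₁ : x ∈ U₁ := Set.mem_biUnion hA₀T hxA₀
    obtain ⟨p, hpU, hp1, hp2⟩ := hconn V₁ V₂ hV₁o hV₂o
      (by rw [hUsplit]; exact Set.union_subset_union hU₁V hU₂V)
      ⟨x, hx, hU₁V hxU₁⟩ ⟨y₂, by rw [hUsplit]; exact Or.inr hy₂, hU₂V hy₂⟩
    exact (hVd.le_bot ⟨hp1, hp2⟩ : False)
  have hyU₁ : y ∈ U₁ := by
    rw [hUsplit, hU₂e, Set.union_empty] at hy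
    exact hy
  obtain ⟨B, hBT, hyB⟩ := Set.mem_iUnion₂.mp hyU₁
  have h1 := hdist m₀ B (hT ▸ hBT) y hyB
  have h2 : ((m₀ : ℝ) + 1) * δ ≤ ((S.card : ℝ) + 1) * δ := by
    have : (m₀ : ℝ) ≤ (S.card : ℝ) := by exact_mod_cast hm₀
    nlinarith
  linarith


lemma mass_le_mu_univ {c : ℝ} {P : Set (Set (Euc d))} (hP : PairwiseDisjointInteriors P) :
    mass d c P ≤ mu d c Set.univ := by
  rw [mass, ENNReal.tsum_eq_iSup_sum]
  refine iSup_le fun s => ?_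
  have hdisj : (↑s : Set ↥P).PairwiseDisjoint
      (fun D : ↥P => interior (D : Set (Euc d))) := by
    intro i _ j _ hij
    have hne : (i : Set (Euc d)) ≠ (j : Set (Euc d)) := fun h => hij (Subtype.ext h)
    exact Set.disjoint_iff_inter_eq_empty.mpr (hP i.2 j.2 hne)
  rw [← measure_biUnion_finset hdisj fun b _ => isOpen_interior.measurableSet]
  exact measure_mono (Set.subset_univ _)

lemma mass_union {c : ℝ} {S : Set (Set (Euc d))} {G : Finset (Set (Euc d))}
    (h : Disjoint (↑G : Set (Set (Euc d))) S) :
    mass d c (S ∪ ↑G) = mass d c S + ∑ D ∈ G, mu d c (interior D) := by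
  rw [mass, Summable.tsum_union_disjoint (f := fun D : Set (Euc d) => mu d c (interior D)) h.symm
    ENNReal.summable ENNReal.summable]
  rw [mass]
  congr 1
  exact Finset.tsum_subtype G fun D => mu d c (interior D)

lemma mu_interior_le {c : ℝ} {K D : Set (Euc d)} (hcopy : IsIsomCopy K D)
    {a : ℝ≥0∞} (hbd : ∀ x ∈ interior D, wt c x ≤ a) :
    mu d c (interior D) ≤ a * volume (interior K) := by
  rw [mu, withDensity_apply _ isOpen_interior.measurableSet]
  calc ∫⁻ x in interior D, wt c x ∂volume
      ≤ ∫⁻ _x in interior D, a ∂volume := setLIntegral_mono measurable_const hbd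
    _ = a * volume (interior D) := setLIntegral_const _ _
    _ = a * volume (interior K) := by rw [copy_interior_vol hcopy]

lemma le_mu_interior {c : ℝ} {K D : Set (Euc d)} (hcopy : IsIsomCopy K D)
    {a : ℝ≥0∞} (hbd : ∀ x ∈ interior D, a ≤ wt c x) :
    a * volume (interior K) ≤ mu d c (interior D) := by
  rw [mu, withDensity_apply _ isOpen_interior.measurableSet]
  calc a * volume (interior K) = a * volume (interior D) := by rw [copy_interior_vol hcopy]
    _ = ∫⁻ _x in interior D, a ∂volume := (setLIntegral_const _ _).symm
    _ ≤ ∫⁻ x in interior D, wt c x ∂volume := setLIntegral_mono (wt_measurable c) hbd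

/-- The key step estimate. -/
lemma step_mass {K : Set (Euc d)} (hKc : IsCompact K) {n : ℕ} (hn : 0 < n)
    {L c : ℝ} (hc : 0 ≤ c)
    (hL : 2 * (n : ℝ) * Metric.diam K ≤ L)
    (hratio : (n : ℝ) / ((n : ℝ) + 1) ≤ Real.exp (-(c * L)))
    {R : Set (Euc d)} {ρR : ℝ} (hR : R ⊆ closedBall (0 : Euc d) ρR)
    {B A : Set (Set (Euc d))} (hB : IsPacking K B) (hstep : ConnStep K n B A) :
    mass d c B ≤ mass d c A ∧
      ({D ∈ A | (D ∩ R).Nonempty} = {D ∈ B | (D ∩ R).Nonempty} ∨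
        mass d c B + ENNReal.ofReal (Real.exp (-(c * ρR)) * (1 / ((n : ℝ) + 1)))
          * volume (interior K) ≤ mass d c A) := by
  classical
  obtain ⟨k, F, G, hkn, hFB, hFc, hGc, hdisj, hAeq, hApack, hconn⟩ := hstep
  have hGA : ∀ D ∈ G, D ∈ A := by
    intro D hD
    rw [hAeq]
    exact Or.inr hD
  have hmemFG : ∀ D ∈ F ∪ G, IsIsomCopy K D := by
    intro D hD
    rcases Finset.mem_union.mp hD with h | h
    · exact hB.1 D (hFB h)
    · exact hApack.1 D (hGA D h)
  -- the union
  have hconn' : IsConnected (⋃ D ∈ ((F ∪ G : Finset (Set (Euc d))) : Set (Set (Euc d))), D) := by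
    rwa [Finset.coe_union]
  set U : Set (Euc d) := ⋃ D ∈ ((F ∪ G : Finset (Set (Euc d))) : Set (Set (Euc d))), D with hU
  have hUne : U.Nonempty := hconn'.nonempty
  have hUc : IsCompact U :=
    (F ∪ G).finite_toSet.isCompact_biUnion fun D hD => copy_compact hKc (hmemFG D hD)
  have hsubU : ∀ D ∈ F ∪ G, D ⊆ U := by
    intro D hD
    exact Set.subset_biUnion_of_mem (u := fun (D : Set (Euc d)) => D) (Finset.mem_coe.mpr hD)
  -- diameter bound
  have hdK : 0 ≤ Metric.diam K := Metric.diam_nonneg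
  have hcard : ((F ∪ G).card : ℝ) + 1 ≤ 2 * (n : ℝ) := by
    have h1 : (F ∪ G).card ≤ F.card + G.card := Finset.card_union_le F G
    have h2 : F.card + G.card = 2 * k + 1 := by omega
    have : ((F ∪ G).card : ℝ) ≤ 2 * (k : ℝ) + 1 := by exact_mod_cast h1.trans_eq h2
    have hkn' : (k : ℝ) + 1 ≤ (n : ℝ) := by exact_mod_cast hkn
    linarith
  have hdistU : ∀ x ∈ U, ∀ y ∈ U, dist x y ≤ L := by
    intro x hx y hy
    have := chain_dist (F ∪ G) (Metric.diam K) hdK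
      (fun D hD => copy_compact hKc (hmemFG D hD))
      (fun D hD => (copy_diam (hmemFG D hD)).le)
      hconn'.isPreconnected x hx y hy
    calc dist x y ≤ (((F ∪ G).card : ℝ) + 1) * Metric.diam K := this
      _ ≤ 2 * (n : ℝ) * Metric.diam K := by nlinarith
      _ ≤ L := hL
  -- max of the weight on U
  obtain ⟨z, hzU, hzmax⟩ := hUc.exists_isMaxOn hUne
    ((Real.continuous_exp.comp ((continuous_const.mul continuous_norm).neg)).continuousOn :
      ContinuousOn (fun x : Euc d => Real.exp (-(c * ‖x‖))) U)
  set a : ℝ≥0∞ := wt c z with ha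
  set w : ℝ≥0∞ := volume (interior K) with hw
  -- upper bound on F-terms
  have hFbound : ∀ D ∈ F, mu d c (interior D) ≤ a * w := by
    intro D hD
    apply mu_interior_le (hB.1 D (hFB hD))
    intro x hx
    have hxU : x ∈ U := hsubU D (Finset.mem_union_left G hD) (interior_subset hx)
    exact ENNReal.ofReal_le_ofReal (isMaxOn_iff.mp hzmax x hxU)
  -- lower bound on G-terms
  set q : ℝ≥0∞ := ENNReal.ofReal ((n : ℝ) / ((n : ℝ) + 1)) * a with hq
  have hGbound : ∀ D ∈ G, q * w ≤ mu d c (interior D) := by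
    intro D hD
    apply le_mu_interior (hApack.1 D (hGA D hD))
    intro x hx
    have hxU : x ∈ U := hsubU D (Finset.mem_union_right F hD) (interior_subset hx)
    have h1 := wt_ratio hc (hdistU x hxU z hzU)
    calc q = ENNReal.ofReal ((n : ℝ) / ((n : ℝ) + 1)) * a := hq
      _ ≤ ENNReal.ofReal (Real.exp (-(c * L))) * wt c z :=
        mul_le_mul_left (ENNReal.ofReal_le_ofReal hratio) _
      _ ≤ wt c x := h1
  -- sums
  have hFsum : ∑ D ∈ F, mu d c (interior D) ≤ (k : ℝ≥0∞) * (a * w) := by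
    calc ∑ D ∈ F, mu d c (interior D) ≤ F.card • (a * w) :=
          Finset.sum_le_card_nsmul F _ _ hFbound
      _ = (k : ℝ≥0∞) * (a * w) := by rw [hFc, nsmul_eq_mul]
  have hGsum : ((k : ℝ≥0∞) + 1) * (q * w) ≤ ∑ D ∈ G, mu d c (interior D) := by
    calc ((k : ℝ≥0∞) + 1) * (q * w) = G.card • (q * w) := by
          rw [hGc, nsmul_eq_mul]; push_cast; ring
      _ ≤ ∑ D ∈ G, mu d c (interior D) := Finset.card_nsmul_le_sum G _ _ hGbound
  -- the key scalar inequality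
  have hkey : (k : ℝ≥0∞) * (a * w) + ENNReal.ofReal (1 / ((n : ℝ) + 1)) * (a * w)
      ≤ ((k : ℝ≥0∞) + 1) * (q * w) := by
    have hscal : (k : ℝ≥0∞) + ENNReal.ofReal (1 / ((n : ℝ) + 1))
        ≤ ((k : ℝ≥0∞) + 1) * ENNReal.ofReal ((n : ℝ) / ((n : ℝ) + 1)) := by
      have hn1 : (0 : ℝ) < (n : ℝ) + 1 := by positivity
      have hk1 : (k : ℝ) + 1 ≤ (n : ℝ) := by exact_mod_cast hkn
      have hreal : (k : ℝ) + 1 / ((n : ℝ) + 1) ≤ ((k : ℝ) + 1) * ((n : ℝ) / ((n : ℝ) + 1)) := by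
        have hrw : (k : ℝ) + 1 / ((n : ℝ) + 1) = ((k : ℝ) * ((n : ℝ) + 1) + 1) / ((n : ℝ) + 1) := by
          field_simp
        have hrw2 : ((k : ℝ) + 1) * ((n : ℝ) / ((n : ℝ) + 1))
            = (((k : ℝ) + 1) * (n : ℝ)) / ((n : ℝ) + 1) := by ring
        rw [hrw, hrw2, div_le_div_iff₀ hn1 hn1]
        nlinarith
      calc (k : ℝ≥0∞) + ENNReal.ofReal (1 / ((n : ℝ) + 1))
          = ENNReal.ofReal ((k : ℝ) + 1 / ((n : ℝ) + 1)) := by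
            rw [ENNReal.ofReal_add (by positivity) (by positivity), ENNReal.ofReal_natCast]
        _ ≤ ENNReal.ofReal (((k : ℝ) + 1) * ((n : ℝ) / ((n : ℝ) + 1))) :=
            ENNReal.ofReal_le_ofReal hreal
        _ = ((k : ℝ≥0∞) + 1) * ENNReal.ofReal ((n : ℝ) / ((n : ℝ) + 1)) := by
            rw [ENNReal.ofReal_mul (by positivity), ENNReal.ofReal_add (by positivity) zero_le_one,
              ENNReal.ofReal_natCast, ENNReal.ofReal_one]
    calc (k : ℝ≥0∞) * (a * w) + ENNReal.ofReal (1 / ((n : ℝ) + 1)) * (a * w)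
        = ((k : ℝ≥0∞) + ENNReal.ofReal (1 / ((n : ℝ) + 1))) * (a * w) := by rw [add_mul]
      _ ≤ (((k : ℝ≥0∞) + 1) * ENNReal.ofReal ((n : ℝ) / ((n : ℝ) + 1))) * (a * w) :=
          mul_le_mul_left hscal _
      _ = ((k : ℝ≥0∞) + 1) * (q * w) := by rw [hq]; ring
  -- mass splittings
  have hBsplit : mass d c B = mass d c (B \ ↑F) + ∑ D ∈ F, mu d c (interior D) := by
    conv_lhs => rw [show B = (B \ ↑F) ∪ ↑F from (Set.diff_union_of_subset hFB).symm]
    exact mass_union Set.disjoint_sdiff_right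
  have hAsplit : mass d c A = mass d c (B \ ↑F) + ∑ D ∈ G, mu d c (interior D) := by
    rw [hAeq]
    exact mass_union hdisj
  have hmono : mass d c B ≤ mass d c A := by
    rw [hBsplit, hAsplit]
    apply add_le_add_right
    calc ∑ D ∈ F, mu d c (interior D) ≤ (k : ℝ≥0∞) * (a * w) := hFsum
      _ ≤ (k : ℝ≥0∞) * (a * w) + ENNReal.ofReal (1 / ((n : ℝ) + 1)) * (a * w) := le_self_add
      _ ≤ ((k : ℝ≥0∞) + 1) * (q * w) := hkey
      _ ≤ ∑ D ∈ G, mu d c (interior D) := hGsum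
  refine ⟨hmono, ?_⟩
  by_cases htouch : (U ∩ R).Nonempty
  · right
    obtain ⟨p, hpU, hpR⟩ := htouch
    have hpz : Real.exp (-(c * ρR)) ≤ Real.exp (-(c * ‖z‖)) := by
      have h1 : ‖p‖ ≤ ρR := by
        have := hR hpR
        rwa [mem_closedBall, dist_zero_right] at this
      have h2 : Real.exp (-(c * ‖p‖)) ≤ Real.exp (-(c * ‖z‖)) := isMaxOn_iff.mp hzmax p hpU
      have h3 : Real.exp (-(c * ρR)) ≤ Real.exp (-(c * ‖p‖)) := by
        apply Real.exp_le_exp.mpr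
        nlinarith [mul_le_mul_of_nonneg_left h1 hc]
      linarith
    have heps : ENNReal.ofReal (Real.exp (-(c * ρR)) * (1 / ((n : ℝ) + 1))) * w
        ≤ ENNReal.ofReal (1 / ((n : ℝ) + 1)) * (a * w) := by
      rw [ENNReal.ofReal_mul (Real.exp_nonneg _), ha, wt]
      calc ENNReal.ofReal (Real.exp (-(c * ρR))) * ENNReal.ofReal (1 / ((n : ℝ) + 1)) * w
          ≤ ENNReal.ofReal (Real.exp (-(c * ‖z‖))) * ENNReal.ofReal (1 / ((n : ℝ) + 1)) * w := by
            apply mul_le_mul_left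
            exact mul_le_mul_left (ENNReal.ofReal_le_ofReal hpz) _
        _ = ENNReal.ofReal (1 / ((n : ℝ) + 1)) *
            (ENNReal.ofReal (Real.exp (-(c * ‖z‖))) * w) := by ring
    rw [hBsplit, hAsplit]
    calc mass d c (B \ ↑F) + ∑ D ∈ F, mu d c (interior D)
          + ENNReal.ofReal (Real.exp (-(c * ρR)) * (1 / ((n : ℝ) + 1))) * w
        ≤ mass d c (B \ ↑F) +
          ((k : ℝ≥0∞) * (a * w) + ENNReal.ofReal (1 / ((n : ℝ) + 1)) * (a * w)) := by
          rw [add_assoc]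
          exact add_le_add_right (add_le_add hFsum heps) _
      _ ≤ mass d c (B \ ↑F) + ((k : ℝ≥0∞) + 1) * (q * w) := add_le_add_right hkey _
      _ ≤ mass d c (B \ ↑F) + ∑ D ∈ G, mu d c (interior D) := add_le_add_right hGsum _
  · left
    have hUR : U ∩ R = ∅ := Set.not_nonempty_iff_eq_empty.mp htouch
    have hDR : ∀ D ∈ F ∪ G, D ∩ R = ∅ := by
      intro D hD
      apply Set.eq_empty_of_subset_empty
      rw [← hUR]
      exact Set.inter_subset_inter_left R (hsubU D hD)
    ext D
    simp only [Set.mem_setOf_eq]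
    constructor
    · rintro ⟨hDA, hDne⟩
      rw [hAeq] at hDA
      rcases hDA with hDBF | hDG
      · exact ⟨hDBF.1, hDne⟩
      · exfalso
        rw [hDR D (Finset.mem_union_right F (Finset.mem_coe.mp hDG))] at hDne
        exact Set.not_nonempty_empty hDne
    · rintro ⟨hDB, hDne⟩
      have hDF : D ∉ (↑F : Set (Set (Euc d))) := by
        intro hDF
        rw [hDR D (Finset.mem_union_left G (Finset.mem_coe.mp hDF))] at hDne
        exact Set.not_nonempty_empty hDne
      refine ⟨?_, hDne⟩
      rw [hAeq]
      exact Or.inl ⟨hDB, hDF⟩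


lemma connStep_packing {K : Set (Euc d)} {n : ℕ} {B A : Set (Set (Euc d))}
    (h : ConnStep K n B A) : IsPacking K A := by
  obtain ⟨k, F, G, -, -, -, -, -, -, hp, -⟩ := h
  exact hp

end AuxICC

/-- If a sequence of packings of `K` increases under the connected
`n`-saturation ordering, then in every bounded region it is eventually constant. -/
theorem increasing_connected_chain_eventually_constant
    {d : ℕ} (K : Set (Euc d)) (hK : IsBody K) (n : ℕ) (hn : 0 < n)
    (P : ℕ → Set (Set (Euc d))) (hpack : ∀ i, IsPacking K (P i))
    (hchain : ∀ i, ConnGE K n (P (i + 1)) (P i)) :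
    ∀ R : Set (Euc d), Bornology.IsBounded R →
      ∃ N : ℕ, ∀ m : ℕ, N ≤ m →
        {D ∈ P m | (D ∩ R).Nonempty} = {D ∈ P N | (D ∩ R).Nonempty} := by
  intro R hRbdd
  classical
  by_cases hKe : interior K = ∅
  · -- degenerate case: K is empty, no step is possible
    have hK0 : K = ∅ := by rw [hK.2, hKe, closure_empty]
    have hall : ∀ i, ∀ D ∈ P i, D = (∅ : Set (Euc d)) := by
      intro i D hD
      obtain ⟨f, hf⟩ := (hpack i).1 D hD
      rw [hf, hK0, Set.image_empty]
    have hconst : ∀ i, P (i + 1) = P i := by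
      intro i
      have hch : Relation.ReflTransGen (ConnStep K n) (P i) (P (i + 1)) := hchain i
      rcases Relation.ReflTransGen.cases_head hch with heq | ⟨X, hstepX, -⟩
      · exact heq.symm
      · exfalso
        obtain ⟨k, F, G, -, hFB, -, -, -, hAeq, hApack, hconn⟩ := hstepX
        obtain ⟨x, hx⟩ := hconn.nonempty
        obtain ⟨D, hD, hxD⟩ := Set.mem_iUnion₂.mp hx
        rcases hD with hDF | hDG
        · rw [hall i D (hFB hDF)] at hxD
          exact hxD
        · obtain ⟨f, hf⟩ := hApack.1 D (by rw [hAeq]; exact Or.inr hDG)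
          rw [hf, hK0, Set.image_empty] at hxD
          exact hxD
    have hPm : ∀ m, P m = P 0 := by
      intro m
      induction m with
      | zero => rfl
      | succ m ih => rw [hconst m, ih]
    exact ⟨0, fun m _ => by rw [hPm m]⟩
  · -- main case
    have hKint : (interior K).Nonempty := Set.nonempty_iff_ne_empty.mpr hKe
    have hw0 : 0 < volume (interior K) := isOpen_interior.measure_pos volume hKint
    have hwtop : volume (interior K) ≠ ⊤ :=
      ((measure_mono interior_subset).trans_lt hK.1.measure_lt_top).ne
    have hδ0 : 0 ≤ Metric.diam K := Metric.diam_nonneg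
    have hn0 : (0 : ℝ) < (n : ℝ) := by exact_mod_cast hn
    set L : ℝ := 2 * (n : ℝ) * (Metric.diam K + 1) with hLdef
    have hL0 : 0 < L := by positivity
    have hL : 2 * (n : ℝ) * Metric.diam K ≤ L := by nlinarith
    set c : ℝ := Real.log (((n : ℝ) + 1) / (n : ℝ)) / L with hcdef
    have hlogpos : 0 < Real.log (((n : ℝ) + 1) / (n : ℝ)) :=
      Real.log_pos (by rw [lt_div_iff₀ hn0]; linarith)
    have hc0 : 0 < c := div_pos hlogpos hL0
    have hratio : (n : ℝ) / ((n : ℝ) + 1) ≤ Real.exp (-(c * L)) := by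
      have hcL : c * L = Real.log (((n : ℝ) + 1) / (n : ℝ)) := by
        rw [hcdef]
        field_simp
      rw [hcL, Real.exp_neg, Real.exp_log (by positivity), inv_div]
    obtain ⟨ρR, hρR⟩ := hRbdd.subset_closedBall (0 : Euc d)
    set eps : ℝ≥0∞ := ENNReal.ofReal (Real.exp (-(c * ρR)) * (1 / ((n : ℝ) + 1)))
      * volume (interior K) with hepsdef
    have heps0 : 0 < eps := by
      apply ENNReal.mul_pos
      · exact (ENNReal.ofReal_pos.mpr (by positivity)).ne'
      · exact hw0.ne'
    have hepstop : eps ≠ ⊤ := ENNReal.mul_ne_top ENNReal.ofReal_ne_top hwtop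
    have hCtop : AuxICC.mu d c Set.univ ≠ ⊤ := (AuxICC.mu_univ_lt_top d hc0).ne
    have hstepfull : ∀ X Y : Set (Set (Euc d)), IsPacking K X → ConnGE K n Y X →
        IsPacking K Y ∧ AuxICC.mass d c X ≤ AuxICC.mass d c Y ∧
        ({D ∈ Y | (D ∩ R).Nonempty} = {D ∈ X | (D ∩ R).Nonempty} ∨
          AuxICC.mass d c X + eps ≤ AuxICC.mass d c Y) := by
      intro X Y hX hXY
      have hXY' : Relation.ReflTransGen (ConnStep K n) X Y := hXY
      clear hXY
      induction hXY' with
      | refl => exact ⟨hX, le_rfl, Or.inl rfl⟩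
      | @tail b Z hXb hbZ ih =>
        obtain ⟨hbpack, hble, hbor⟩ := ih
        have hstep := AuxICC.step_mass hK.1 hn hc0.le hL hratio hρR hbpack hbZ
        refine ⟨AuxICC.connStep_packing hbZ, hble.trans hstep.1, ?_⟩
        rcases hbor with hbeq | hbineq
        · rcases hstep.2 with hZeq | hZineq
          · exact Or.inl (hZeq.trans hbeq)
          · refine Or.inr ?_
            calc AuxICC.mass d c X + eps ≤ AuxICC.mass d c b + eps :=
                  add_le_add_left hble eps
              _ ≤ AuxICC.mass d c Z := hZineq
        · refine Or.inr (hbineq.trans hstep.1)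
    have hstep_i : ∀ i, AuxICC.mass d c (P i) ≤ AuxICC.mass d c (P (i + 1)) ∧
        ({D ∈ P (i + 1) | (D ∩ R).Nonempty} = {D ∈ P i | (D ∩ R).Nonempty} ∨
          AuxICC.mass d c (P i) + eps ≤ AuxICC.mass d c (P (i + 1))) := by
      intro i
      have h := hstepfull (P i) (P (i + 1)) (hpack i) (hchain i)
      exact ⟨h.2.1, h.2.2⟩
    have hmonoΦ : Monotone (fun i => AuxICC.mass d c (P i)) :=
      monotone_nat_of_le_succ fun i => (hstep_i i).1
    have hbound : ∀ i, AuxICC.mass d c (P i) ≤ AuxICC.mu d c Set.univ :=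
      fun i => AuxICC.mass_le_mu_univ (hpack i).2
    by_contra hcon
    push_neg at hcon
    have hchange : ∀ N, ∃ i, N ≤ i ∧
        AuxICC.mass d c (P i) + eps ≤ AuxICC.mass d c (P (i + 1)) := by
      intro N
      by_contra hnone
      push_neg at hnone
      have heq : ∀ m, N ≤ m →
          {D ∈ P m | (D ∩ R).Nonempty} = {D ∈ P N | (D ∩ R).Nonempty} := by
        intro m hm
        induction m, hm using Nat.le_induction with
        | base => rfl
        | succ m hm ih =>
          rcases (hstep_i m).2 with h | h
          · exact h.trans ih
          · exact absurd h (not_le_of_gt (hnone m hm))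
      obtain ⟨m, hm, hne⟩ := hcon N
      exact hne (heq m hm)
    have hgrow : ∀ j : ℕ, ∃ m, (j : ℝ≥0∞) * eps ≤ AuxICC.mass d c (P m) := by
      intro j
      induction j with
      | zero => exact ⟨0, by simp⟩
      | succ j ih =>
        obtain ⟨m, hm⟩ := ih
        obtain ⟨i, him, hi⟩ := hchange m
        refine ⟨i + 1, ?_⟩
        have h1 : AuxICC.mass d c (P m) ≤ AuxICC.mass d c (P i) := hmonoΦ him
        have hcast : ((j + 1 : ℕ) : ℝ≥0∞) = (j : ℝ≥0∞) + 1 := by push_cast; ring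
        rw [hcast]
        calc ((j : ℝ≥0∞) + 1) * eps = (j : ℝ≥0∞) * eps + eps := by ring
          _ ≤ AuxICC.mass d c (P i) + eps := add_le_add_left (hm.trans h1) eps
          _ ≤ AuxICC.mass d c (P (i + 1)) := hi
    have hjle : ∀ j : ℕ, (j : ℝ≥0∞) ≤ AuxICC.mu d c Set.univ / eps := by
      intro j
      obtain ⟨m, hm⟩ := hgrow j
      exact (ENNReal.le_div_iff_mul_le (Or.inl heps0.ne') (Or.inl hepstop)).mpr
        (hm.trans (hbound m))
    have hCd : AuxICC.mu d c Set.univ / eps ≠ ⊤ :=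
      (ENNReal.div_lt_top hCtop heps0.ne').ne
    obtain ⟨j, hj⟩ := ENNReal.exists_nat_gt hCd
    exact absurd (hjle j) (not_le.mpr hj)

end
end

section
/- Let K ⊂ ℝ^d be a body of diameter 1, n a positive integer, μ the measure with density (n/(n+1))^{|x|/(2n−1)} dx, and R ⊂ ℝ^d a bounded domain. Then there is a constant ε > 0 such that whenever a packing A of K is obtained from a packing B by a single connected replacement of k < n copies of K by k+1 copies, and some copy of K involved in the replacement intersects R, then (χ_A * μ)(R) ≥ (χ_B * μ)(R) + ε; and if the replacement does not intersect R then (χ_A * μ)(R) ≥ (χ_B * μ)(R). -/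
open MeasureTheory Metric Filter Pointwise
open scoped ENNReal NNReal

noncomputable section

theorem vol_isom_image {d : ℕ} (f : Euc d ≃ᵢ Euc d) {K : Set (Euc d)} (hK : MeasurableSet K) :
    volume (f '' K) = volume K := by
  set L := f.toRealLinearIsometryEquiv with hL
  have h2 : f '' K = (fun y => y + f 0) '' (L '' K) := by
    rw [Set.image_image]
    apply Set.image_congr
    intro x _
    rw [f.toRealLinearIsometryEquiv_apply x]; abel
  have hLK : volume (L '' K) = volume K := by
    rw [L.image_eq_preimage_symm]
    exact L.symm.measurePreserving.measure_preimage hK.nullMeasurableSet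
  have hKm : MeasurableSet (L '' K) :=
    L.toHomeomorph.toMeasurableEquiv.measurableSet_image.2 hK
  have h3 : (fun y : Euc d => y + f 0) '' (L '' K) = (fun y => y - f 0) ⁻¹' (L '' K) := by
    ext y
    constructor
    · rintro ⟨x, hx, rfl⟩; simpa using hx
    · intro hy; exact ⟨y - f 0, hy, by simp⟩
  rw [h2, h3, (measurePreserving_sub_right volume (f 0)).measure_preimage hKm.nullMeasurableSet,
    hLK]


section Chain
variable {X : Type*} [MetricSpace X]

open Classical in
private noncomputable def chainStep (𝒞 V : Finset (Set X)) : Finset (Set X) :=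
  𝒞.filter (fun t => t ∈ V ∨ ∃ t' ∈ V, (t ∩ t').Nonempty)

private noncomputable def chainV (𝒞 : Finset (Set X)) (t₀ : Set X) : ℕ → Finset (Set X)
  | 0 => {t₀}
  | (j+1) => chainStep 𝒞 (chainV 𝒞 t₀ j)

set_option linter.unusedSectionVars false in
private lemma mem_chainStep {𝒞 V : Finset (Set X)} {t : Set X} :
    t ∈ chainStep 𝒞 V ↔ t ∈ 𝒞 ∧ (t ∈ V ∨ ∃ t' ∈ V, (t ∩ t').Nonempty) := by
  classical
  simp [chainStep]

variable {𝒞 : Finset (Set X)} {t₀ : Set X}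

private lemma chainV_subset (ht₀ : t₀ ∈ 𝒞) : ∀ j, chainV 𝒞 t₀ j ⊆ 𝒞
  | 0 => by simpa [chainV] using ht₀
  | (j+1) => fun t ht => (mem_chainStep.1 ht).1

private lemma chainV_mono (ht₀ : t₀ ∈ 𝒞) (j : ℕ) : chainV 𝒞 t₀ j ⊆ chainV 𝒞 t₀ (j+1) := by
  intro t ht
  exact mem_chainStep.2 ⟨chainV_subset ht₀ j ht, Or.inl ht⟩

private lemma mem_chainV_self (ht₀ : t₀ ∈ 𝒞) : ∀ j, t₀ ∈ chainV 𝒞 t₀ j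
  | 0 => by simp [chainV]
  | (j+1) => chainV_mono ht₀ j (mem_chainV_self ht₀ j)

private lemma chainV_dist (hb : ∀ t ∈ 𝒞, Bornology.IsBounded t)
    (hd : ∀ t ∈ 𝒞, Metric.diam t ≤ 1) (ht₀ : t₀ ∈ 𝒞) {x : X} (hx : x ∈ t₀) :
    ∀ j, ∀ t ∈ chainV 𝒞 t₀ j, ∀ y ∈ t, dist x y ≤ j + 1 := by
  intro j
  induction j with
  | zero =>
    intro t ht y hy
    simp only [chainV, Finset.mem_singleton] at ht
    have hy' : y ∈ t₀ := ht ▸ hy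
    simpa using (Metric.dist_le_diam_of_mem (hb t₀ ht₀) hx hy').trans (hd t₀ ht₀)
  | succ j ih =>
    intro t ht y hy
    rcases mem_chainStep.1 ht with ⟨htC, h | ⟨t', ht', z, hz⟩⟩
    · have := ih t h y hy
      push_cast
      push_cast at this
      linarith
    · have h1 : dist x z ≤ j + 1 := ih t' ht' z hz.2
      have h2 : dist z y ≤ 1 :=
        (Metric.dist_le_diam_of_mem (hb t htC) hz.1 hy).trans (hd t htC)
      have := dist_triangle x z y
      push_cast
      push_cast at h1
      linarith

private lemma exists_chainV_stable (ht₀ : t₀ ∈ 𝒞) :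
    ∃ j < 𝒞.card, chainV 𝒞 t₀ (j+1) = chainV 𝒞 t₀ j := by
  by_contra h
  push_neg at h
  have key : ∀ j ≤ 𝒞.card, j + 1 ≤ (chainV 𝒞 t₀ j).card := by
    intro j
    induction j with
    | zero => intro _; simp [chainV]
    | succ j ih =>
      intro hj
      have hlt : chainV 𝒞 t₀ j ⊂ chainV 𝒞 t₀ (j+1) :=
        ssubset_of_ne_of_subset (Ne.symm (h j (by omega))) (chainV_mono ht₀ j)
      have := Finset.card_lt_card hlt
      have := ih (by omega)
      omega
  have h1 := key 𝒞.card le_rfl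
  have h2 := Finset.card_le_card (chainV_subset ht₀ 𝒞.card)
  omega

private lemma chainV_stable_all (hcl : ∀ t ∈ 𝒞, IsClosed t) (hne : ∀ t ∈ 𝒞, t.Nonempty)
    (hconn : IsPreconnected (⋃ t ∈ 𝒞, (t : Set X))) (ht₀ : t₀ ∈ 𝒞) {j : ℕ}
    (hstab : chainV 𝒞 t₀ (j+1) = chainV 𝒞 t₀ j) : 𝒞 ⊆ chainV 𝒞 t₀ j := by
  classical
  set V := chainV 𝒞 t₀ j with hV
  intro t ht
  by_contra htV
  set U := ⋃ t ∈ 𝒞, (t : Set X) with hU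
  set U₁ := ⋃ t ∈ V, (t : Set X) with hU₁
  set U₂ := ⋃ t ∈ (𝒞 \ V), (t : Set X) with hU₂
  have hdisj : ∀ z, z ∈ U₁ → z ∈ U₂ → False := by
    intro z hz1 hz2
    rcases Set.mem_iUnion₂.1 hz1 with ⟨t1, ht1, hzt1⟩
    rcases Set.mem_iUnion₂.1 hz2 with ⟨t2, ht2, hzt2⟩
    rcases Finset.mem_sdiff.1 ht2 with ⟨ht2C, ht2V⟩
    exact ht2V (hstab ▸ (mem_chainStep.2 ⟨ht2C, Or.inr ⟨t1, ht1, ⟨z, hzt2, hzt1⟩⟩⟩))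
  have hcover : U ⊆ U₁ ∪ U₂ := by
    intro z hz
    rcases Set.mem_iUnion₂.1 hz with ⟨t', ht', hzt⟩
    by_cases h : t' ∈ V
    · exact Or.inl (Set.mem_biUnion h hzt)
    · exact Or.inr (Set.mem_biUnion (Finset.mem_sdiff.2 ⟨ht', h⟩) hzt)
  have hcl1 : IsClosed U₁ := Set.Finite.isClosed_biUnion (V.finite_toSet)
    (fun t' ht' => hcl t' (chainV_subset ht₀ j ht'))
  have hcl2 : IsClosed U₂ := Set.Finite.isClosed_biUnion ((𝒞 \ V).finite_toSet)
    (fun t' ht' => hcl t' (Finset.mem_sdiff.1 ht').1)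
  have hne1 : (U ∩ U₁).Nonempty := by
    rcases hne t₀ ht₀ with ⟨z, hz⟩
    exact ⟨z, Set.mem_biUnion ht₀ hz, Set.mem_biUnion (mem_chainV_self ht₀ j) hz⟩
  have hne2 : (U ∩ U₂).Nonempty := by
    rcases hne t ht with ⟨z, hz⟩
    exact ⟨z, Set.mem_biUnion ht hz, Set.mem_biUnion (Finset.mem_sdiff.2 ⟨ht, htV⟩) hz⟩
  rcases (isPreconnected_closed_iff.1 hconn) U₁ U₂ hcl1 hcl2 hcover hne1 hne2 with
    ⟨z, _, hz1, hz2⟩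
  exact hdisj z hz1 hz2

/-- Points of a connected finite union of closed bounded nonempty sets of diameter ≤ 1
are at distance at most the number of sets. -/
private lemma dist_le_card_of_connected_union (𝒞 : Finset (Set X))
    (hcl : ∀ t ∈ 𝒞, IsClosed t) (hb : ∀ t ∈ 𝒞, Bornology.IsBounded t)
    (hne : ∀ t ∈ 𝒞, t.Nonempty) (hd : ∀ t ∈ 𝒞, Metric.diam t ≤ 1)
    (hconn : IsPreconnected (⋃ t ∈ 𝒞, (t : Set X)))
    {x y : X} (hx : x ∈ ⋃ t ∈ 𝒞, (t : Set X)) (hy : y ∈ ⋃ t ∈ 𝒞, (t : Set X)) :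
    dist x y ≤ 𝒞.card := by
  rcases Set.mem_iUnion₂.1 hx with ⟨t₀, ht₀, hxt⟩
  rcases Set.mem_iUnion₂.1 hy with ⟨ty, hty, hyt⟩
  rcases exists_chainV_stable (𝒞 := 𝒞) (t₀ := t₀) ht₀ with ⟨j, hj, hstab⟩
  have hall := chainV_stable_all hcl hne hconn ht₀ hstab
  have := chainV_dist hb hd ht₀ hxt j ty (hall hty) y hyt
  have hc : (j : ℝ) + 1 ≤ 𝒞.card := by exact_mod_cast Nat.succ_le_of_lt hj
  linarith

end Chain


section Kup
variable {d n : ℕ}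

private def kupW (n : ℕ) {d : ℕ} (x : Euc d) : ℝ≥0∞ :=
  ENNReal.ofReal (((n : ℝ) / (n + 1)) ^ (‖x‖ / (2 * (n : ℝ) - 1)))

private lemma kup_apply {S : Set (Euc d)} (hS : MeasurableSet S) :
    kupMeasure d n S = ∫⁻ x in S, kupW n x := by
  rw [kupMeasure, withDensity_apply _ hS]; rfl

private lemma kup_c_pos (hn : 0 < n) : 0 < (n : ℝ) / (n + 1) := by
  apply div_pos
  · exact_mod_cast hn
  · positivity

private lemma kup_c_le_one : (n : ℝ) / (n + 1) ≤ 1 := by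
  rw [div_le_one (by positivity)]
  linarith

private lemma kup_s_pos (hn : 0 < n) : (0 : ℝ) < 2 * (n : ℝ) - 1 := by
  have : (1 : ℝ) ≤ (n : ℝ) := by exact_mod_cast hn
  linarith

private lemma kupW_anti (hn : 0 < n) {a b : Euc d} (h : ‖a‖ ≤ ‖b‖ + (2 * (n : ℝ) - 1)) :
    ENNReal.ofReal ((n : ℝ) / (n + 1)) * kupW n b ≤ kupW n a := by
  set c : ℝ := (n : ℝ) / (n + 1) with hc
  set s : ℝ := 2 * (n : ℝ) - 1 with hs
  have hcpos := kup_c_pos (n := n) hn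
  have hspos := kup_s_pos (n := n) hn
  have h1 : c ^ ((‖b‖ + s) / s) ≤ c ^ (‖a‖ / s) := by
    apply Real.rpow_le_rpow_of_exponent_ge hcpos kup_c_le_one
    gcongr
  have h2 : c ^ ((‖b‖ + s) / s) = c ^ (‖b‖ / s) * c := by
    rw [add_div, div_self (ne_of_gt hspos), Real.rpow_add hcpos, Real.rpow_one]
  calc ENNReal.ofReal c * kupW n b
      = ENNReal.ofReal (c ^ (‖b‖ / s) * c) := by
        rw [ENNReal.ofReal_mul (Real.rpow_nonneg hcpos.le _)]
        rw [kupW, mul_comm]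
    _ ≤ ENNReal.ofReal (c ^ (‖a‖ / s)) := by
        rw [← h2]; exact ENNReal.ofReal_le_ofReal h1
    _ = kupW n a := rfl

private lemma kupW_ge (hn : 0 < n) {x : Euc d} {ρ : ℝ} (h : ‖x‖ ≤ ρ) :
    ENNReal.ofReal (((n : ℝ) / (n + 1)) ^ (ρ / (2 * (n : ℝ) - 1))) ≤ kupW n x := by
  apply ENNReal.ofReal_le_ofReal
  apply Real.rpow_le_rpow_of_exponent_ge (kup_c_pos hn) kup_c_le_one
  gcongr
  exact (kup_s_pos hn).le

/-- Comparison: if every point of `S'` has norm at most `2n-1` more than every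
point of `S`, and `S'` is at least as big as `S`, then `μ S' ≥ c μ S`. -/
private lemma kup_compare (hn : 0 < n) {S S' : Set (Euc d)}
    (hS : MeasurableSet S) (hS' : MeasurableSet S') (hvol : volume S ≤ volume S')
    (hdist : ∀ a ∈ S', ∀ b ∈ S, ‖a‖ ≤ ‖b‖ + (2 * (n : ℝ) - 1)) :
    ENNReal.ofReal ((n : ℝ) / (n + 1)) * kupMeasure d n S ≤ kupMeasure d n S' := by
  set t : ℝ≥0∞ := ⨆ b ∈ S, kupW n b with ht
  have h1 : kupMeasure d n S ≤ t * volume S := by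
    rw [kup_apply hS]
    calc ∫⁻ x in S, kupW n x ≤ ∫⁻ _ in S, t := by
          apply setLIntegral_mono' hS
          intro b hb
          exact le_biSup _ hb
      _ = t * volume S := setLIntegral_const S t
  have h2 : ∀ a ∈ S', ENNReal.ofReal ((n : ℝ) / (n + 1)) * t ≤ kupW n a := by
    intro a ha
    have : ENNReal.ofReal ((n : ℝ) / (n + 1)) * t
        = ⨆ b ∈ S, ENNReal.ofReal ((n : ℝ) / (n + 1)) * kupW n b := by
      rw [ht, ENNReal.mul_iSup]
      congr 1
      ext b
      rw [ENNReal.mul_iSup]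
    rw [this]
    exact iSup₂_le fun b hb => kupW_anti hn (hdist a ha b hb)
  have h3 : ENNReal.ofReal ((n : ℝ) / (n + 1)) * t * volume S' ≤ kupMeasure d n S' := by
    rw [kup_apply hS']
    calc ENNReal.ofReal ((n : ℝ) / (n + 1)) * t * volume S'
        = ∫⁻ _ in S', ENNReal.ofReal ((n : ℝ) / (n + 1)) * t :=
          (setLIntegral_const S' _).symm
      _ ≤ ∫⁻ x in S', kupW n x := setLIntegral_mono' hS' h2
  calc ENNReal.ofReal ((n : ℝ) / (n + 1)) * kupMeasure d n S
      ≤ ENNReal.ofReal ((n : ℝ) / (n + 1)) * (t * volume S) := by gcongr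
    _ ≤ ENNReal.ofReal ((n : ℝ) / (n + 1)) * (t * volume S') := by gcongr
    _ = ENNReal.ofReal ((n : ℝ) / (n + 1)) * t * volume S' := by ring
    _ ≤ kupMeasure d n S' := h3

private lemma kup_lower (hn : 0 < n) {S : Set (Euc d)} (hS : MeasurableSet S) {ρ : ℝ}
    (hd : ∀ x ∈ S, ‖x‖ ≤ ρ) :
    ENNReal.ofReal (((n : ℝ) / (n + 1)) ^ (ρ / (2 * (n : ℝ) - 1))) * volume S
      ≤ kupMeasure d n S := by
  rw [kup_apply hS]
  calc ENNReal.ofReal (((n : ℝ) / (n + 1)) ^ (ρ / (2 * (n : ℝ) - 1))) * volume S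
      = ∫⁻ _ in S, ENNReal.ofReal (((n : ℝ) / (n + 1)) ^ (ρ / (2 * (n : ℝ) - 1))) :=
        (setLIntegral_const S _).symm
    _ ≤ ∫⁻ x in S, kupW n x := setLIntegral_mono' hS fun x hx => kupW_ge hn (hd x hx)

end Kup


private lemma core_sum {α : Type*} [DecidableEq α] {k n : ℕ} (hkn : k < n)
    (F G : Finset α) (hF : F.card = k) (hG : G.card = k + 1)
    (m : α → ℝ≥0∞) (E₀ : α) (hE₀ : E₀ ∈ G)
    (hpair : ∀ E ∈ F ∪ G, ∀ E' ∈ G, ENNReal.ofReal ((n : ℝ) / (n + 1)) * m E ≤ m E') :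
    ∑ E ∈ F, m E + ENNReal.ofReal (1 / ((n : ℝ) + 1)) * m E₀ ≤ ∑ E ∈ G, m E := by
  have hne : (F ∪ G).Nonempty := ⟨E₀, Finset.mem_union_right _ hE₀⟩
  obtain ⟨Es, hEs, hM⟩ := Finset.exists_mem_eq_sup (F ∪ G) hne m
  set M := m Es with hMdef
  have hle : ∀ E ∈ F ∪ G, m E ≤ M := fun E hE => hM ▸ Finset.le_sup hE
  have h1 : ∑ E ∈ F, m E ≤ (k : ℝ≥0∞) * M := by
    have := Finset.sum_le_card_nsmul F m M
      (fun E hE => hle E (Finset.mem_union_left _ hE))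
    rwa [hF, nsmul_eq_mul] at this
  have h2 : ((k : ℝ≥0∞) + 1) * (ENNReal.ofReal ((n : ℝ) / (n + 1)) * M) ≤ ∑ E ∈ G, m E := by
    have := Finset.card_nsmul_le_sum G m (ENNReal.ofReal ((n : ℝ) / (n + 1)) * M)
      (fun E' hE' => hpair Es hEs E' hE')
    rwa [hG, nsmul_eq_mul, Nat.cast_add, Nat.cast_one] at this
  have h3 : m E₀ ≤ M := hle E₀ (Finset.mem_union_right _ hE₀)
  have h5 : (k : ℝ) + 1 / ((n : ℝ) + 1) ≤ ((k : ℝ) + 1) * ((n : ℝ) / ((n : ℝ) + 1)) := by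
    have hn1 : (0 : ℝ) < (n : ℝ) + 1 := by positivity
    have hk1 : (k : ℝ) + 1 ≤ (n : ℝ) := by exact_mod_cast hkn
    rw [← sub_nonneg]
    have key : ((k : ℝ) + 1) * ((n : ℝ) / ((n : ℝ) + 1)) - ((k : ℝ) + 1 / ((n : ℝ) + 1))
        = ((n : ℝ) - ((k : ℝ) + 1)) / ((n : ℝ) + 1) := by
      field_simp
      ring
    rw [key]
    apply div_nonneg _ hn1.le
    linarith
  calc ∑ E ∈ F, m E + ENNReal.ofReal (1 / ((n : ℝ) + 1)) * m E₀
      ≤ (k : ℝ≥0∞) * M + ENNReal.ofReal (1 / ((n : ℝ) + 1)) * M := by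
        gcongr
    _ = ENNReal.ofReal ((k : ℝ) + 1 / ((n : ℝ) + 1)) * M := by
        rw [ENNReal.ofReal_add (by positivity) (by positivity), add_mul,
          ENNReal.ofReal_natCast]
    _ ≤ ENNReal.ofReal (((k : ℝ) + 1) * ((n : ℝ) / ((n : ℝ) + 1))) * M :=
        mul_le_mul_left (ENNReal.ofReal_le_ofReal h5) M
    _ = ((k : ℝ≥0∞) + 1) * (ENNReal.ofReal ((n : ℝ) / (n + 1)) * M) := by
        rw [ENNReal.ofReal_mul (by positivity), ← mul_assoc]
        congr 2
        rw [ENNReal.ofReal_add (by positivity) zero_le_one]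
        simp [ENNReal.ofReal_natCast]
    _ ≤ ∑ E ∈ G, m E := h2



section Helpers
variable {d : ℕ}

private lemma copy_facts {K D : Set (Euc d)} (hK : IsBody K) (hdiam : Metric.diam K = 1)
    (h : IsIsomCopy K D) :
    IsCompact D ∧ D.Nonempty ∧ Metric.diam D = 1 ∧ volume D = volume K := by
  obtain ⟨f, rfl⟩ := h
  have hKne : K.Nonempty := by
    rcases Set.eq_empty_or_nonempty K with h | h
    · rw [h, Metric.diam_empty] at hdiam; norm_num at hdiam
    · exact h
  refine ⟨hK.1.image f.continuous, hKne.image f, ?_, ?_⟩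
  · rw [f.isometry.diam_image, hdiam]
  · exact vol_isom_image f hK.1.measurableSet

private lemma diffuse_union {μ : Measure (Euc d)} {S T : Set (Set (Euc d))}
    (h : Disjoint S T) (p : Euc d) :
    diffuse μ (S ∪ T) p = diffuse μ S p + diffuse μ T p :=
  ENNReal.summable.tsum_union_disjoint (f := fun D => μ {x : Euc d | p - x ∈ D}) h
    ENNReal.summable

private lemma diffuse_finset {μ : Measure (Euc d)} (G : Finset (Set (Euc d))) (p : Euc d) :
    diffuse μ (↑G) p = ∑ D ∈ G, μ {x : Euc d | p - x ∈ D} :=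
  Finset.tsum_subtype G fun D => μ {x : Euc d | p - x ∈ D}

private lemma vol_pos_of_body {S : Set (Euc d)} (hS : S = closure (interior S))
    (hne : S.Nonempty) : 0 < volume S := by
  have hint : (interior S).Nonempty := by
    by_contra h
    rw [Set.not_nonempty_iff_eq_empty] at h
    rw [h, closure_empty] at hS
    exact hne.ne_empty hS
  calc (0 : ℝ≥0∞) < volume (interior S) := isOpen_interior.measure_pos volume hint
    _ ≤ volume S := measure_mono interior_subset

end Helpers
/-- Let `K ⊂ ℝ^d` have diameter 1, let `μ` be the measure with
density `(n/(n+1))^{|x|/(2n-1)}`, and let `R` be a bounded domain. There is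
`ε > 0` such that any single connected replacement of `k < n` copies of `K` by
`k+1` copies whose copies meet `R` increases `(χ * μ)(R)` by at least `ε`, and any
replacement not meeting `R` does not decrease it. -/
theorem connected_replacement_increases_diffused_measure_by_margin
    {d : ℕ} (K : Set (Euc d)) (hK : IsBody K) (hdiam : Metric.diam K = 1)
    (n : ℕ) (hn : 0 < n)
    (R : Set (Euc d)) (hRbd : Bornology.IsBounded R) (hRdom : R = closure (interior R)) :
    ∃ ε : ℝ, 0 < ε ∧
      ∀ (B A : Set (Set (Euc d))) (k : ℕ) (F G : Finset (Set (Euc d))),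
        IsPacking K B → IsPacking K A →
        k < n → ↑F ⊆ B → F.card = k → G.card = k + 1 →
        Disjoint (↑G : Set (Set (Euc d))) (B \ ↑F) →
        A = (B \ ↑F) ∪ ↑G →
        IsConnected (⋃ D ∈ (↑F ∪ ↑G : Set (Set (Euc d))), D) →
        (((⋃ D ∈ (↑F ∪ ↑G : Set (Set (Euc d))), D) ∩ R).Nonempty →
            diffuseOn (kupMeasure d n) B R + ENNReal.ofReal ε ≤ diffuseOn (kupMeasure d n) A R) ∧
        diffuseOn (kupMeasure d n) B R ≤ diffuseOn (kupMeasure d n) A R := by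
  classical
  obtain ⟨r₀, hr₀⟩ := hRbd.subset_closedBall (0 : Euc d)
  set s : ℝ := 2 * (n : ℝ) - 1 with hs_def
  set ρ : ℝ := 2 * r₀ + s with hρ_def
  set wmin : ℝ := ((n : ℝ) / (n + 1)) ^ (ρ / s) with hwmin_def
  set q : ℝ := 1 / ((n : ℝ) + 1) with hq_def
  set Γ₀ : ℝ≥0∞ := ENNReal.ofReal q * (ENNReal.ofReal wmin * volume K) with hΓ₀_def
  set Γ : ℝ≥0∞ := Γ₀ * volume R with hΓ_def
  have hRclosed : IsClosed R := hRdom ▸ isClosed_closure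
  have hRmeas : MeasurableSet R := hRclosed.measurableSet
  have main : ∀ (B A : Set (Set (Euc d))) (k : ℕ) (F G : Finset (Set (Euc d))),
      IsPacking K B → IsPacking K A →
      k < n → ↑F ⊆ B → F.card = k → G.card = k + 1 →
      Disjoint (↑G : Set (Set (Euc d))) (B \ ↑F) →
      A = (B \ ↑F) ∪ ↑G →
      IsConnected (⋃ D ∈ (↑F ∪ ↑G : Set (Set (Euc d))), D) →
      (((⋃ D ∈ (↑F ∪ ↑G : Set (Set (Euc d))), D) ∩ R).Nonempty →
          diffuseOn (kupMeasure d n) B R + Γ ≤ diffuseOn (kupMeasure d n) A R) ∧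
      diffuseOn (kupMeasure d n) B R ≤ diffuseOn (kupMeasure d n) A R := by
    intro B A k F G hB hA hkn hFB hFcard hGcard hdisjG hAeq hconn
    set 𝒞 : Finset (Set (Euc d)) := F ∪ G with h𝒞
    set U : Set (Euc d) := ⋃ t ∈ 𝒞, (t : Set (Euc d)) with hU
    have hUeq : (⋃ D ∈ (↑F ∪ ↑G : Set (Set (Euc d))), D) = U := by
      rw [hU, h𝒞, ← Finset.coe_union, Finset.set_biUnion_coe]
    have hcopy : ∀ t ∈ 𝒞, IsIsomCopy K t := by
      intro t ht
      rcases Finset.mem_union.1 ht with h | h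
      · exact hB.1 t (hFB h)
      · exact hA.1 t (hAeq ▸ Set.mem_union_right _ (Finset.mem_coe.2 h))
    have hfacts : ∀ t ∈ 𝒞, IsCompact t ∧ t.Nonempty ∧ Metric.diam t = 1 ∧
        volume t = volume K := fun t ht => copy_facts hK hdiam (hcopy t ht)
    have hcard : (𝒞.card : ℝ) ≤ s := by
      have h1 : 𝒞.card ≤ F.card + G.card := Finset.card_union_le F G
      have h2 : F.card + G.card = 2 * k + 1 := by omega
      have h3 : (k : ℝ) + 1 ≤ (n : ℝ) := by exact_mod_cast hkn
      have h4 : (𝒞.card : ℝ) ≤ 2 * (k : ℝ) + 1 := by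
        rw [h2] at h1
        exact_mod_cast h1
      rw [hs_def]
      linarith
    have hdistU : ∀ x ∈ U, ∀ y ∈ U, dist x y ≤ s := by
      intro x hx y hy
      have := dist_le_card_of_connected_union 𝒞
        (fun t ht => (hfacts t ht).1.isClosed)
        (fun t ht => (hfacts t ht).1.isBounded)
        (fun t ht => (hfacts t ht).2.1)
        (fun t ht => le_of_eq (hfacts t ht).2.2.1)
        (by rw [← hU, ← hUeq]; exact hconn.isPreconnected) hx hy
      linarith
    have hGne : G.Nonempty := Finset.card_pos.1 (by omega)
    obtain ⟨E₀, hE₀⟩ := hGne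
    have hE₀𝒞 : E₀ ∈ 𝒞 := Finset.mem_union_right F hE₀
    have hE₀U : E₀ ⊆ U := fun x hx => Set.mem_biUnion hE₀𝒞 hx
    have hSmeas : ∀ (p : Euc d), ∀ t ∈ 𝒞, MeasurableSet {x : Euc d | p - x ∈ t} := by
      intro p t ht
      exact (measurable_const.sub measurable_id) (hfacts t ht).1.measurableSet
    have hSvol : ∀ (p : Euc d), ∀ t ∈ 𝒞, volume {x : Euc d | p - x ∈ t} = volume K := by
      intro p t ht
      have h1 : volume ((fun x => p - x) ⁻¹' t) = volume t :=
        (Measure.measurePreserving_sub_left volume p).measure_preimage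
          (hfacts t ht).1.measurableSet.nullMeasurableSet
      exact h1.trans (hfacts t ht).2.2.2
    have hpoint : ∀ p : Euc d,
        diffuse (kupMeasure d n) B p
            + ENNReal.ofReal q * kupMeasure d n {x : Euc d | p - x ∈ E₀}
          ≤ diffuse (kupMeasure d n) A p := by
      intro p
      set m : Set (Euc d) → ℝ≥0∞ := fun E => kupMeasure d n {x : Euc d | p - x ∈ E} with hm
      have hpair : ∀ E ∈ 𝒞, ∀ E' ∈ G,
          ENNReal.ofReal ((n : ℝ) / (n + 1)) * m E ≤ m E' := by
        intro E hE E' hE'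
        have hE'𝒞 : E' ∈ 𝒞 := Finset.mem_union_right F hE'
        apply kup_compare hn (hSmeas p E hE) (hSmeas p E' hE'𝒞)
          (le_of_eq ((hSvol p E hE).trans (hSvol p E' hE'𝒞).symm))
        intro a ha b hb
        have hpa : p - a ∈ U := Set.mem_biUnion hE'𝒞 ha
        have hpb : p - b ∈ U := Set.mem_biUnion hE hb
        have hd : dist (p - a) (p - b) ≤ s := hdistU _ hpa _ hpb
        have hab : ‖a - b‖ ≤ s := by
          rw [show a - b = (p - b) - (p - a) by abel, ← dist_eq_norm, dist_comm]
          exact hd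
        calc ‖a‖ = ‖b + (a - b)‖ := by congr 1; abel
          _ ≤ ‖b‖ + ‖a - b‖ := norm_add_le _ _
          _ ≤ ‖b‖ + s := by linarith
      have hcore := core_sum hkn F G hFcard hGcard m E₀ hE₀ hpair
      have hsplitA : diffuse (kupMeasure d n) A p
          = diffuse (kupMeasure d n) (B \ ↑F) p + ∑ E ∈ G, m E := by
        rw [hAeq, diffuse_union hdisjG.symm p, diffuse_finset]
      have hsplitB : diffuse (kupMeasure d n) B p
          = diffuse (kupMeasure d n) (B \ ↑F) p + ∑ E ∈ F, m E := by
        conv_lhs => rw [show B = (B \ ↑F) ∪ ↑F from (Set.diff_union_of_subset hFB).symm]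
        rw [diffuse_union Set.disjoint_sdiff_left p, diffuse_finset]
      rw [hsplitA, hsplitB, add_assoc]
      exact add_le_add_right hcore _
    constructor
    · rintro ⟨z, hzU, hzR⟩
      rw [hUeq] at hzU
      have hlow : ∀ p ∈ R, Γ₀ ≤ ENNReal.ofReal q
          * kupMeasure d n {x : Euc d | p - x ∈ E₀} := by
        intro p hp
        rw [hΓ₀_def]
        apply mul_le_mul_right
        have hb : ∀ x ∈ {x : Euc d | p - x ∈ E₀}, ‖x‖ ≤ ρ := by
          intro x hx
          have he : p - x ∈ U := hE₀U hx
          have h1 : ‖p‖ ≤ r₀ := by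
            have := hr₀ hp
            rwa [Metric.mem_closedBall, dist_zero_right] at this
          have h2 : ‖z‖ ≤ r₀ := by
            have := hr₀ hzR
            rwa [Metric.mem_closedBall, dist_zero_right] at this
          have h3 : dist (p - x) z ≤ s := hdistU _ he _ hzU
          have h4 : ‖p - x‖ ≤ ‖z‖ + dist (p - x) z := by
            calc ‖p - x‖ = ‖z + (p - x - z)‖ := by congr 1; abel
              _ ≤ ‖z‖ + ‖p - x - z‖ := norm_add_le _ _
              _ = ‖z‖ + dist (p - x) z := by rw [dist_eq_norm]
          have h5 : ‖x‖ ≤ ‖p‖ + ‖p - x‖ := by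
            calc ‖x‖ = ‖p - (p - x)‖ := by congr 1; abel
              _ ≤ ‖p‖ + ‖p - x‖ := norm_sub_le _ _
          rw [hρ_def]
          linarith
        have hlor := kup_lower hn (hSmeas p E₀ hE₀𝒞) hb
        rw [hSvol p E₀ hE₀𝒞] at hlor
        exact hlor
      calc diffuseOn (kupMeasure d n) B R + Γ
          = (∫⁻ p in R, diffuse (kupMeasure d n) B p) + ∫⁻ _ in R, Γ₀ := by
            rw [setLIntegral_const]
            rfl
        _ = ∫⁻ p in R, (diffuse (kupMeasure d n) B p + Γ₀) :=
            (lintegral_add_right _ measurable_const).symm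
        _ ≤ ∫⁻ p in R, diffuse (kupMeasure d n) A p := by
            apply setLIntegral_mono' hRmeas
            intro p hp
            exact le_trans (add_le_add_right (hlow p hp) _) (hpoint p)
        _ = diffuseOn (kupMeasure d n) A R := rfl
    · apply lintegral_mono
      intro p
      exact le_trans (le_add_right le_rfl) (hpoint p)
  rcases Set.eq_empty_or_nonempty R with hRe | hRne
  · refine ⟨1, one_pos, ?_⟩
    intro B A k F G hB hA hkn hFB hFc hGc hdis hAeq hconn
    have h := main B A k F G hB hA hkn hFB hFc hGc hdis hAeq hconn
    refine ⟨?_, h.2⟩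
    rintro ⟨z, -, hzR⟩
    rw [hRe] at hzR
    exact absurd hzR (Set.notMem_empty z)
  · have hKne : K.Nonempty := by
      rcases Set.eq_empty_or_nonempty K with h | h
      · rw [h, Metric.diam_empty] at hdiam
        norm_num at hdiam
      · exact h
    have hKpos : 0 < volume K := vol_pos_of_body hK.2 hKne
    have hKfin : volume K ≠ ⊤ := hK.1.measure_lt_top.ne
    have hRpos : 0 < volume R := vol_pos_of_body hRdom hRne
    have hRfin : volume R ≠ ⊤ := hRbd.measure_lt_top.ne
    have hq : 0 < q := by rw [hq_def]; positivity
    have hwm : 0 < wmin := Real.rpow_pos_of_pos (kup_c_pos hn) _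
    have hΓ₀pos : Γ₀ ≠ 0 := by
      rw [hΓ₀_def]
      exact mul_ne_zero (ENNReal.ofReal_pos.2 hq).ne'
        (mul_ne_zero (ENNReal.ofReal_pos.2 hwm).ne' hKpos.ne')
    have hΓ₀fin : Γ₀ ≠ ⊤ :=
      ENNReal.mul_ne_top ENNReal.ofReal_ne_top (ENNReal.mul_ne_top ENNReal.ofReal_ne_top hKfin)
    have hΓpos : Γ ≠ 0 := mul_ne_zero hΓ₀pos hRpos.ne'
    have hΓfin : Γ ≠ ⊤ := ENNReal.mul_ne_top hΓ₀fin hRfin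
    refine ⟨Γ.toReal, ENNReal.toReal_pos hΓpos hΓfin, ?_⟩
    intro B A k F G hB hA hkn hFB hFc hGc hdis hAeq hconn
    have h := main B A k F G hB hA hkn hFB hFc hGc hdis hAeq hconn
    rw [ENNReal.ofReal_toReal hΓfin]
    exact h
end
end

section
/- Let μ and ν be finite Borel measures on ℝ^d and let A, B, C be packings. If A μ-dominates B (μ * χ_A ≥ μ * χ_B everywhere) and B ν-dominates C (ν * χ_B ≥ ν * χ_C everywhere), then A (μ*ν)-dominates C: (μ * ν * χ_A) ≥ (μ * ν * χ_C) everywhere. In particular, diffusive domination is a transitive relation on packings. -/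
open MeasureTheory Metric Filter Pointwise
open scoped ENNReal NNReal

noncomputable section

/-! Convolving with a measure is monotone, and `(μ * ν) * χ_P = μ * (ν * χ_P) = ν * (μ * χ_P)`
by Fubini. Hence `(μ * ν) * χ_C ≤ μ * (ν * χ_B) = ν * (μ * χ_B) ≤ ν * (μ * χ_A)`. The sums over a
packing are countable, so they commute with the integrals. -/

theorem MeasureTheory.Measure.conv_apply {M : Type*} [AddMonoid M] [MeasurableSpace M]
    [MeasurableAdd₂ M] (μ ν : Measure M) [SFinite ν] {s : Set M} (hs : MeasurableSet s) :
    (μ.conv ν) s = ∫⁻ x, ν ((x + ·) ⁻¹' s) ∂μ := by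
  rw [Measure.conv, Measure.map_apply measurable_add hs, Measure.prod_apply (measurable_add hs)]
  rfl

-- A body with empty interior is empty, and the nonempty interiors are disjoint open sets in a
-- separable space.
theorem IsGenPacking.countable {d : ℕ} {P : Set (Set (Euc d))} (hP : IsGenPacking P) :
    P.Countable := by
  have hinterior : (P \ {∅}).Countable := by
    refine Set.PairwiseDisjoint.countable_of_isOpen (s := interior)
      (fun D hD E hE hne => Set.disjoint_iff_inter_eq_empty.mpr (hP.2 hD.1 hE.1 hne))
      (fun _ _ => isOpen_interior) fun D hD => ?_
    rw [Set.nonempty_iff_ne_empty]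
    intro hempty
    exact hD.2 ((hP.1 D hD.1).2.trans (by rw [hempty, closure_empty]))
  exact (hinterior.union (Set.countable_singleton ∅)).mono fun D hD => by
    by_cases h : D = ∅ <;> simp_all

theorem IsGenPacking.measurableSet {d : ℕ} {P : Set (Set (Euc d))} (hP : IsGenPacking P)
    {D : Set (Euc d)} (hD : D ∈ P) : MeasurableSet D :=
  (hP.1 D hD).1.measurableSet

theorem diffuse_conv_eq_lintegral {d : ℕ} (μ ν : Measure (Euc d)) [SFinite ν]
    {P : Set (Set (Euc d))} (hP : IsGenPacking P) (p : Euc d) :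
    diffuse (μ.conv ν) P p = ∫⁻ x, diffuse ν P (p - x) ∂μ := by
  have : Countable P := hP.countable.to_subtype
  have hpreimage : ∀ D : P, MeasurableSet ((fun q : Euc d × Euc d => p - q.1 - q.2) ⁻¹' D) :=
    fun D => (by fun_prop : Measurable fun q : Euc d × Euc d => p - q.1 - q.2)
      (hP.measurableSet D.2)
  calc diffuse (μ.conv ν) P p
      = ∑' D : P, ∫⁻ x, ν {z | p - x - z ∈ (D : Set (Euc d))} ∂μ := by
        refine tsum_congr fun D => ?_
        refine (Measure.conv_apply μ ν (measurable_const_sub p (hP.measurableSet D.2))).trans ?_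
        simp only [Set.preimage, Set.mem_ofPred_eq, sub_sub]
    _ = ∫⁻ x, diffuse ν P (p - x) ∂μ :=
        (lintegral_tsum fun D => (measurable_measure_prodMk_left (hpreimage D)).aemeasurable).symm

theorem MuDom.conv {d : ℕ} {μ ν : Measure (Euc d)} [SFinite μ] [SFinite ν]
    {A B C : Set (Set (Euc d))} (hA : IsGenPacking A) (hB : IsGenPacking B)
    (hC : IsGenPacking C) (hAB : MuDom μ A B) (hBC : MuDom ν B C) :
    MuDom (μ.conv ν) A C := fun p =>
  calc diffuse (μ.conv ν) C p
      = ∫⁻ x, diffuse ν C (p - x) ∂μ := diffuse_conv_eq_lintegral μ ν hC p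
    _ ≤ ∫⁻ x, diffuse ν B (p - x) ∂μ := lintegral_mono fun x => hBC (p - x)
    _ = diffuse (ν.conv μ) B p := by rw [Measure.conv_comm, diffuse_conv_eq_lintegral μ ν hB p]
    _ = ∫⁻ y, diffuse μ B (p - y) ∂ν := diffuse_conv_eq_lintegral ν μ hB p
    _ ≤ ∫⁻ y, diffuse μ A (p - y) ∂ν := lintegral_mono fun y => hAB (p - y)
    _ = diffuse (μ.conv ν) A p := by rw [Measure.conv_comm, diffuse_conv_eq_lintegral ν μ hA p]

theorem DiffDom.trans {d : ℕ} {A B C : Set (Set (Euc d))} (hA : IsGenPacking A)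
    (hB : IsGenPacking B) (hC : IsGenPacking C) (hAB : DiffDom A B) (hBC : DiffDom B C) :
    DiffDom A C := by
  obtain ⟨μ, _, hμ⟩ := hAB
  obtain ⟨ν, _, hν⟩ := hBC
  exact ⟨μ.conv ν, inferInstance, hμ.conv hA hB hC hν⟩

/-- If `A` `μ`-dominates `B` and `B` `ν`-dominates `C`, then `A`
`(μ*ν)`-dominates `C`. In particular, diffusive domination is transitive. -/
theorem muDom_conv_trans {d : ℕ} :
    (∀ (μ ν : Measure (Euc d)), IsFiniteMeasure μ → IsFiniteMeasure ν →
      ∀ A B C : Set (Set (Euc d)), IsGenPacking A → IsGenPacking B → IsGenPacking C →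
        MuDom μ A B → MuDom ν B C → MuDom (μ.conv ν) A C) ∧
    (∀ A B C : Set (Set (Euc d)), IsGenPacking A → IsGenPacking B → IsGenPacking C →
        DiffDom A B → DiffDom B C → DiffDom A C) :=
  ⟨fun _ _ _ _ _ _ _ hA hB hC hAB hBC => hAB.conv hA hB hC hBC,
    fun _ _ _ hA hB hC => DiffDom.trans hA hB hC⟩
end
end

section
/- Let X be a nonempty compact Hausdorff topological space and let ≽ be a reflexive and transitive relation on X whose graph {(x,y) : x ≽ y} is closed in X × X. Then X contains a maximal element: there exists x ∈ X such that for every y ∈ X, y ≽ x implies x ≽ y. -/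
/-!
Order the space by `x ≤ y ↔ r y x`. Closedness of the graph makes every upper set `Ici a` closed,
so for a chain `c` the sets `Ici a`, `a ∈ c`, form a directed family of nonempty closed subsets of
a compact space; their intersection is nonempty and consists of upper bounds of `c`. Zorn's lemma
then gives a maximal element.
-/

open Set

section CompactSpace

variable {α : Type*} [TopologicalSpace α] [Preorder α] [CompactSpace α]

theorem IsChain.bddAbove_of_closedIciTopology [ClosedIciTopology α] {c : Set α}
    (hc : IsChain (· ≤ ·) c) (hne : c.Nonempty) : BddAbove c := by
  have : Nonempty c := hne.to_subtype
  have hdir : Directed (· ⊇ ·) fun a : c => Ici a.1 :=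
    hc.directedOn.directed_val.mono_comp (· ≤ ·) (g := Ici) fun _ _ => Ici_subset_Ici.mpr
  obtain ⟨ub, hub⟩ := IsCompact.nonempty_iInter_of_directed_nonempty_isCompact_isClosed _ hdir
    (fun _ => nonempty_Ici) (fun _ => isClosed_Ici.isCompact) fun _ => isClosed_Ici
  exact ⟨ub, fun a ha => mem_iInter.mp hub ⟨a, ha⟩⟩

theorem exists_isMax_of_compactSpace [ClosedIciTopology α] [Nonempty α] : ∃ a : α, IsMax a :=
  zorn_le_nonempty fun _ => IsChain.bddAbove_of_closedIciTopology

end CompactSpace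

theorem closed_preorder_on_compact_has_maximal_element_general
    {X : Type*} [TopologicalSpace X] [CompactSpace X] [Nonempty X]
    (r : X → X → Prop)
    (hrefl : ∀ x, r x x)
    (htrans : ∀ x y z, r x y → r y z → r x z)
    (hclosed : IsClosed {p : X × X | r p.1 p.2}) :
    ∃ x : X, ∀ y : X, r y x → r x y := by
  let _ : Preorder X :=
    { le := fun x y => r y x
      le_refl := hrefl
      le_trans := fun x y z hxy hyz => htrans z y x hyz hxy }
  have _ : ClosedIciTopology X := ⟨fun a => hclosed.preimage (continuous_id.prodMk continuous_const)⟩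
  exact exists_isMax_of_compactSpace

/-- A closed reflexive transitive relation on a nonempty compact
Hausdorff space has a maximal element. -/
theorem closed_preorder_on_compact_has_maximal_element
    {X : Type*} [TopologicalSpace X] [CompactSpace X] [T2Space X] [Nonempty X]
    (r : X → X → Prop)
    (hrefl : ∀ x, r x x)
    (htrans : ∀ x y z, r x y → r y z → r x z)
    (hclosed : IsClosed {p : X × X | r p.1 p.2}) :
    ∃ x : X, ∀ y : X, r y x → r x y :=
  closed_preorder_on_compact_has_maximal_element_general r hrefl htrans hclosed
end
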